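/- arXiv:2402.06629 — 10 statements merged into one kernel-verified Lean document; each statement's English description precedes it below -/
import Mathlib

section
/- Jung's enclosing theorem: For every integer d ≥ 1 and every nonempty bounded subset P of EuclideanSpace ℝ (Fin d), there exists a point c ∈ EuclideanSpace ℝ (Fin d) such that P is contained in the closed ball centered at c of radius sqrt(d / (2*(d+1))) * diam P; consequently the circumradius of P is at most sqrt(d / (2*(d+1))) times its diameter. -/
/-!
Let `c` minimise the farthest distance `R = supDist c K` to the compact set `K = closure P`.
Then `c` lies in the closed convex hull of the points of `K` at distance `R` from it: otherwise
a separating direction `v` would let `c + t • v` have a smaller farthest distance. By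
Carathéodory, each point `p` of their convex hull is a convex combination `∑ wᵢ zᵢ` of at most
`d + 1` of them, and the variance identity
`∑ᵢⱼ wᵢ wⱼ ‖zᵢ - zⱼ‖² = 2 ∑ᵢ wᵢ ‖zᵢ - c‖² - 2 ‖p - c‖²`, combined with `∑ wᵢ² ≥ 1 / (d + 1)`,
gives `R² - ‖p - c‖² ≤ d / (2 (d + 1)) * diam²`; letting `p → c` yields Jung's bound.
-/

open Metric Set Module Bornology Topology
open scoped RealInnerProductSpace

section SupDist

variable {α : Type*} [PseudoMetricSpace α] {s : Set α} {x y : α}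

/-- Junk value `0` when `s` is empty or unbounded. -/
noncomputable def supDist (x : α) (s : Set α) : ℝ := sSup (dist x '' s)

lemma dist_le_supDist (hs : IsBounded s) (hy : y ∈ s) : dist x y ≤ supDist x s := by
  obtain ⟨r, hr⟩ := hs.subset_closedBall x
  exact le_csSup ⟨r, forall_mem_image.2 fun z hz => dist_comm z x ▸ hr hz⟩ (mem_image_of_mem _ hy)

lemma supDist_le (hs : s.Nonempty) {r : ℝ} (h : ∀ y ∈ s, dist x y ≤ r) : supDist x s ≤ r :=
  csSup_le (hs.image _) (forall_mem_image.mpr h)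

lemma IsCompact.exists_dist_eq_supDist (hs : IsCompact s) (hne : s.Nonempty) (x : α) :
    ∃ y ∈ s, dist x y = supDist x s := by
  obtain ⟨y, hy, h⟩ :=
    hs.exists_sSup_image_eq hne (continuous_const.dist continuous_id).continuousOn
  exact ⟨y, hy, h.symm⟩

lemma lipschitzWith_supDist (hs : IsBounded s) (hne : s.Nonempty) :
    LipschitzWith 1 (supDist · s) :=
  LipschitzWith.of_le_add fun x x' => supDist_le hne fun y hy =>
    (dist_triangle x x' y).trans (by linarith [dist_le_supDist (x := x') hs hy])

lemma exists_forall_supDist_le [ProperSpace α] (hs : IsBounded s) (hne : s.Nonempty) :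
    ∃ c, ∀ x, supDist c s ≤ supDist x s := by
  obtain ⟨y, hy⟩ := hne
  refine (lipschitzWith_supDist hs ⟨y, hy⟩).continuous.exists_forall_le_of_isBounded y
    (isBounded_closedBall (x := y) (r := supDist y s) |>.subset fun x hx => ?_)
  rw [mem_closedBall]
  exact (dist_le_supDist hs hy).trans hx

end SupDist

lemma IsCompact.exists_lt_forall_le {X α : Type*} [TopologicalSpace X] [LinearOrder α]
    [TopologicalSpace α] [ClosedIciTopology α] [NoMinOrder α] {K : Set X} {f : X → α} {r : α}
    (hK : IsCompact K) (hf : ContinuousOn f K) (h : ∀ x ∈ K, f x < r) :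
    ∃ r' < r, ∀ x ∈ K, f x ≤ r' := by
  rcases K.eq_empty_or_nonempty with rfl | hne
  · obtain ⟨r', hr'⟩ := exists_lt r
    exact ⟨r', hr', by simp⟩
  obtain ⟨x, hx, hmax⟩ := hK.exists_isMaxOn hne hf
  exact ⟨f x, h x hx, hmax⟩

section Weights

variable {ι : Type*} [Fintype ι] {w : ι → ℝ}

lemma card_pos_of_sum_eq_one (hw : ∑ i, w i = 1) : (0 : ℝ) < Fintype.card ι :=
  Nat.cast_pos.2 (Finset.card_pos.2 (Finset.nonempty_of_sum_ne_zero (hw ▸ one_ne_zero)))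

lemma one_div_card_le_sum_sq (hw : ∑ i, w i = 1) : 1 / Fintype.card ι ≤ ∑ i, w i ^ 2 := by
  have h := sq_sum_le_card_mul_sum_sq (s := Finset.univ) (f := w)
  rw [hw, one_pow, Finset.card_univ] at h
  rw [div_le_iff₀ (card_pos_of_sum_eq_one hw)]
  linarith

lemma sum_sum_mul_le_of_diag_eq_zero {a : ι → ι → ℝ} {D : ℝ} (hw0 : ∀ i, 0 ≤ w i)
    (hw : ∑ i, w i = 1) (ha : ∀ i j, a i j ≤ D) (hdiag : ∀ i, a i i = 0) :
    ∑ i, ∑ j, w i * w j * a i j ≤ (1 - 1 / Fintype.card ι) * D := by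
  have hD : 0 ≤ D := by
    obtain ⟨i, -⟩ := Finset.nonempty_of_sum_ne_zero (hw ▸ one_ne_zero)
    exact hdiag i ▸ ha i i
  have hdiag_le : ∑ i, w i ^ 2 * D ≤ ∑ i, ∑ j, w i * w j * (D - a i j) := by
    refine Finset.sum_le_sum fun i _ => ?_
    refine le_of_eq_of_le ?_ (Finset.single_le_sum (f := fun j => w i * w j * (D - a i j))
      (fun j _ => mul_nonneg (mul_nonneg (hw0 i) (hw0 j)) (sub_nonneg.2 (ha i j)))
      (Finset.mem_univ i))
    rw [hdiag, sub_zero, sq]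
  have htotal : ∑ i, ∑ j, w i * w j = 1 := by
    simp only [← Finset.mul_sum, ← Finset.sum_mul, hw, one_mul]
  simp only [mul_sub, Finset.sum_sub_distrib, ← Finset.sum_mul, htotal] at hdiag_le
  nlinarith [mul_le_mul_of_nonneg_right (one_div_card_le_sum_sq hw) hD]

end Weights

section InnerProductSpace

variable {E : Type*} [NormedAddCommGroup E] [InnerProductSpace ℝ E]

lemma dist_add_smul_lt {c x v : E} {R t : ℝ} (hx : dist c x ≤ R) (ht : 0 < t)
    (htv : t * ‖v‖ ^ 2 < 2 * ⟪v, x - c⟫) : dist (c + t • v) x < R := by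
  have hsq : dist (c + t • v) x ^ 2 = dist c x ^ 2 - t * (2 * ⟪v, x - c⟫ - t * ‖v‖ ^ 2) := by
    rw [dist_eq_norm, dist_comm, dist_eq_norm, show c + t • v - x = t • v - (x - c) by abel,
      norm_sub_sq_real, real_inner_smul_left, norm_smul, Real.norm_of_nonneg ht.le]
    ring
  have hlt : dist (c + t • v) x ^ 2 < R ^ 2 := by
    rw [hsq]
    nlinarith [pow_le_pow_left₀ dist_nonneg hx 2, mul_pos ht (sub_pos.2 htv)]
  exact lt_of_pow_lt_pow_left₀ 2 (dist_nonneg.trans hx) hlt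

lemma exists_supDist_lt_of_forall_lt_inner {K : Set E} {c v : E} {δ : ℝ} (hK : IsCompact K)
    (hne : K.Nonempty) (hδ : 0 < δ) (hv : ∀ x ∈ K, dist c x = supDist c K → δ < ⟪v, x - c⟫) :
    ∃ c', supDist c' K < supDist c K := by
  set R := supDist c K
  -- Moving along `v` brings the points of `U` closer; by compactness the points of `K` outside
  -- `U` stay inside a strictly smaller ball, of radius `R'`.
  set U := {x | δ / 2 < ⟪v, x - c⟫}
  have hU : IsOpen U := isOpen_lt continuous_const (by fun_prop)
  obtain ⟨R', hR'R, hR'⟩ : ∃ R' < R, ∀ x ∈ K \ U, dist c x ≤ R' := by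
    refine (hK.diff hU).exists_lt_forall_le (continuous_const.dist continuous_id).continuousOn
      fun x hx => (dist_le_supDist hK.isBounded hx.1).lt_of_ne fun h => hx.2 ?_
    exact (half_lt_self hδ).trans (hv x hx.1 h)
  obtain ⟨t, ht0, ht1, ht2⟩ : ∃ t : ℝ, 0 < t ∧ t * ‖v‖ < R - R' ∧ t * ‖v‖ ^ 2 < δ := by
    have h1 : ∀ᶠ t in 𝓝 (0 : ℝ), t * ‖v‖ < R - R' :=
      (by fun_prop : ContinuousAt (fun t : ℝ => t * ‖v‖) 0).eventually_lt continuousAt_const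
        (by simpa using hR'R)
    have h2 : ∀ᶠ t in 𝓝 (0 : ℝ), t * ‖v‖ ^ 2 < δ :=
      (by fun_prop : ContinuousAt (fun t : ℝ => t * ‖v‖ ^ 2) 0).eventually_lt continuousAt_const
        (by simpa using hδ)
    exact ((eventually_mem_nhdsWithin (a := (0 : ℝ)) (s := Ioi 0)).and
      (nhdsWithin_le_nhds (h1.and h2))).exists
  refine ⟨c + t • v, ?_⟩
  obtain ⟨x, hx, hxR⟩ := hK.exists_dist_eq_supDist hne (c + t • v)
  rw [← hxR]
  by_cases hxU : x ∈ U
  · exact dist_add_smul_lt (dist_le_supDist hK.isBounded hx) ht0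
      (by linarith [show δ / 2 < _ from hxU])
  · calc dist (c + t • v) x ≤ dist (c + t • v) c + dist c x := dist_triangle _ _ _
      _ ≤ t * ‖v‖ + R' := by
        gcongr
        · simp [norm_smul, abs_of_pos ht0]
        · exact hR' x ⟨hx, hxU⟩
      _ < R := by linarith

lemma mem_closure_convexHull_of_forall_supDist_le [CompleteSpace E] {K : Set E} {c : E}
    (hK : IsCompact K) (hne : K.Nonempty) (hc : ∀ z, supDist c K ≤ supDist z K) :
    c ∈ closure (convexHull ℝ {x ∈ K | dist c x = supDist c K}) := by
  by_contra h
  obtain ⟨f, u, hfc, hf⟩ :=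
    geometric_hahn_banach_point_closed (convex_convexHull ℝ _).closure isClosed_closure h
  obtain ⟨c', hc'⟩ := exists_supDist_lt_of_forall_lt_inner hK hne (sub_pos.2 hfc)
    (v := (InnerProductSpace.toDual ℝ E).symm f) fun x hx hxc => by
      rw [inner_sub_right, InnerProductSpace.toDual_symm_apply,
        InnerProductSpace.toDual_symm_apply]
      linarith [hf x (subset_closure (subset_convexHull ℝ _ ⟨hx, hxc⟩))]
  exact (hc c').not_gt hc'

lemma sum_sum_mul_norm_sub_sq {ι : Type*} [Fintype ι] (w : ι → ℝ) (z : ι → E)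
    (hw : ∑ i, w i = 1) (c : E) :
    ∑ i, ∑ j, w i * w j * ‖z i - z j‖ ^ 2 =
      2 * ∑ i, w i * ‖z i - c‖ ^ 2 - 2 * ‖∑ i, w i • z i - c‖ ^ 2 := by
  have hbar : ∑ i, w i • z i - c = ∑ i, w i • (z i - c) := by
    simp only [smul_sub, Finset.sum_sub_distrib, ← Finset.sum_smul, hw, one_smul]
  have hnorm : ‖∑ i, w i • (z i - c)‖ ^ 2 = ∑ i, ∑ j, w i * w j * ⟪z i - c, z j - c⟫ := by
    simp only [← real_inner_self_eq_norm_sq, sum_inner, inner_sum, real_inner_smul_left,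
      real_inner_smul_right, mul_assoc]
    exact Finset.sum_congr rfl fun i _ => Finset.sum_congr rfl fun j _ => by rw [real_inner_comm]
  have hz : ∀ i j,
      ‖z i - z j‖ ^ 2 = ‖z i - c‖ ^ 2 - 2 * ⟪z i - c, z j - c⟫ + ‖z j - c‖ ^ 2 := by
    intro i j
    rw [← norm_sub_sq_real, sub_sub_sub_cancel_right]
  rw [hbar, hnorm]
  simp only [hz, mul_add, mul_sub, Finset.sum_add_distrib, Finset.sum_sub_distrib]
  simp only [mul_assoc, ← Finset.mul_sum, ← Finset.sum_mul]
  simp only [hw, one_mul, mul_left_comm _ (2 : ℝ), ← Finset.mul_sum]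
  ring

variable [FiniteDimensional ℝ E]

lemma sq_sub_dist_sq_le_of_mem_convexHull {T : Set E} {c p : E} {R D : ℝ}
    (hp : p ∈ convexHull ℝ T) (hR : ∀ x ∈ T, dist x c = R)
    (hD : ∀ x ∈ T, ∀ y ∈ T, dist x y ≤ D) :
    R ^ 2 - dist p c ^ 2 ≤ finrank ℝ E / (2 * (finrank ℝ E + 1)) * D ^ 2 := by
  obtain ⟨ι, _, z, w, hzT, hz, hw0, hw, rfl⟩ := eq_pos_convex_span_of_mem_convexHull hp
  replace hzT : ∀ i, z i ∈ T := fun i => hzT (mem_range_self i)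
  have hcard : (Fintype.card ι : ℝ) ≤ finrank ℝ E + 1 := by
    exact_mod_cast hz.card_le_finrank_succ.trans (Nat.succ_le_succ (Submodule.finrank_le _))
  have hvar := sum_sum_mul_norm_sub_sq w z hw c
  have hbound := sum_sum_mul_le_of_diag_eq_zero (fun i => (hw0 i).le) hw
    (a := fun i j => dist (z i) (z j) ^ 2) (D := D ^ 2)
    (fun i j => pow_le_pow_left₀ dist_nonneg (hD _ (hzT i) _ (hzT j)) 2) (by simp)
  simp only [← dist_eq_norm, hR _ (hzT _), ← Finset.sum_mul, hw, one_mul] at hvar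
  have hconst : 1 - 1 / (Fintype.card ι : ℝ) ≤ finrank ℝ E / (finrank ℝ E + 1) := by
    have hd : (finrank ℝ E : ℝ) / (finrank ℝ E + 1) = 1 - 1 / (finrank ℝ E + 1) := by
      field_simp
      ring
    rw [hd]
    gcongr
    exact card_pos_of_sum_eq_one hw
  calc R ^ 2 - dist (∑ i, w i • z i) c ^ 2
      = (∑ i, ∑ j, w i * w j * dist (z i) (z j) ^ 2) / 2 := by linarith
    _ ≤ (1 - 1 / (Fintype.card ι : ℝ)) * D ^ 2 / 2 := by linarith
    _ ≤ finrank ℝ E / (finrank ℝ E + 1) * D ^ 2 / 2 := by gcongr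
    _ = finrank ℝ E / (2 * (finrank ℝ E + 1)) * D ^ 2 := by field_simp

lemma sq_le_of_mem_closure_convexHull {T : Set E} {c : E} {R D : ℝ}
    (hc : c ∈ closure (convexHull ℝ T)) (hR : ∀ x ∈ T, dist x c = R)
    (hD : ∀ x ∈ T, ∀ y ∈ T, dist x y ≤ D) :
    R ^ 2 ≤ finrank ℝ E / (2 * (finrank ℝ E + 1)) * D ^ 2 := by
  have hclosed :
      IsClosed {p | R ^ 2 - dist p c ^ 2 ≤ finrank ℝ E / (2 * (finrank ℝ E + 1)) * D ^ 2} :=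
    isClosed_le (by fun_prop) continuous_const
  simpa using hclosed.closure_subset_iff.2
    (fun p hp => sq_sub_dist_sq_le_of_mem_convexHull hp hR hD) hc

end InnerProductSpace

theorem jung_enclosing_general (d : ℕ)
    (P : Set (EuclideanSpace ℝ (Fin d))) (hne : P.Nonempty)
    (hbdd : Bornology.IsBounded P) :
    ∃ c : EuclideanSpace ℝ (Fin d),
      P ⊆ Metric.closedBall c
        (Real.sqrt ((d : ℝ) / (2 * ((d : ℝ) + 1))) * Metric.diam P) := by
  have hK : IsCompact (closure P) := hbdd.isCompact_closure
  obtain ⟨c, hc⟩ := exists_forall_supDist_le hK.isBounded hne.closure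
  have hR : supDist c (closure P) ^ 2 ≤ d / (2 * (d + 1)) * diam P ^ 2 := by
    simpa [finrank_euclideanSpace_fin] using sq_le_of_mem_closure_convexHull
      (mem_closure_convexHull_of_forall_supDist_le hK hne.closure hc)
      (fun x hx => (dist_comm x c).trans hx.2)
      (fun x hx y hy => diam_closure P ▸ dist_le_diam_of_mem hK.isBounded hx.1 hy.1)
  refine ⟨c, fun x hx => mem_closedBall'.2 ?_⟩
  calc dist c x ≤ supDist c (closure P) := dist_le_supDist hK.isBounded (subset_closure hx)
    _ ≤ √(d / (2 * (d + 1)) * diam P ^ 2) := Real.le_sqrt_of_sq_le hR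
    _ = √(d / (2 * (d + 1))) * diam P := by
      rw [Real.sqrt_mul (by positivity), Real.sqrt_sq diam_nonneg]

/-- **Jung's enclosing theorem.** Every nonempty bounded subset `P` of
`EuclideanSpace ℝ (Fin d)` is contained in a closed ball of radius
`sqrt (d / (2*(d+1))) * diam P`. -/
theorem jung_enclosing (d : ℕ) (hd : 1 ≤ d)
    (P : Set (EuclideanSpace ℝ (Fin d))) (hne : P.Nonempty)
    (hbdd : Bornology.IsBounded P) :
    ∃ c : EuclideanSpace ℝ (Fin d),
      P ⊆ Metric.closedBall c
        (Real.sqrt ((d : ℝ) / (2 * ((d : ℝ) + 1))) * Metric.diam P) :=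
  jung_enclosing_general d P hne hbdd
end

section
/- Circumradius of regular simplices: Let d ≥ 1 and let v : Fin (d+1) → EuclideanSpace ℝ (Fin d) be the vertices of a regular d-simplex with common edge length ℓ > 0, and let κ = (1/(d+1)) • ∑ i, v i be its barycenter. Then (i) dist κ (v i) = sqrt(d / (2*(d+1))) * ℓ for every i, (ii) the convex hull of the vertices is contained in the closed ball centered at κ of radius sqrt(d / (2*(d+1))) * ℓ, and (iii) every closed ball containing all the vertices has radius at least sqrt(d / (2*(d+1))) * ℓ. Hence the circumradius of the regular d-simplex coincides with its barycentric circumradius and equals sqrt(d / (2*(d+1))) * ℓ. -/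
/-!
Let `κ` be the barycenter of `n` points `v i`. Since `∑ i, (v i - κ) = 0`, expanding around `κ`
gives the parallel axis identity `∑ i, ‖v i - c‖² = ∑ i, ‖v i - κ‖² + n ‖κ - c‖²` for every `c`.
Taking `c = v j` for a regular simplex of edge `ℓ` and summing over `j` shows
`∑ i, ‖v i - κ‖² = (n - 1) ℓ² / 2`, hence `‖v j - κ‖² = (n - 1) ℓ² / (2 n)` for each `j`.
Conversely, if all vertices lie in a ball of radius `r` about `c`, the identity bounds
`n · ‖v j - κ‖²` by `n r²`, so no enclosing ball is smaller than the one about `κ`.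
-/

open scoped RealInnerProductSpace

section Barycenter

variable {ι E : Type*} [Fintype ι] [NormedAddCommGroup E] [InnerProductSpace ℝ E]
  {v : ι → E} {κ : E}

theorem sum_sub_barycenter_eq_zero (hκ : (Fintype.card ι : ℝ) • κ = ∑ i, v i) :
    ∑ i, (v i - κ) = 0 := by
  rw [Finset.sum_sub_distrib, Finset.sum_const, Finset.card_univ,
    ← Nat.cast_smul_eq_nsmul ℝ, hκ, sub_self]

theorem sum_dist_sq_eq_sum_dist_barycenter_sq_add
    (hκ : (Fintype.card ι : ℝ) • κ = ∑ i, v i) (c : E) :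
    ∑ i, dist (v i) c ^ 2 = ∑ i, dist (v i) κ ^ 2 + Fintype.card ι * dist κ c ^ 2 := by
  have expand : ∀ i, dist (v i) c ^ 2
      = dist (v i) κ ^ 2 + 2 * ⟪v i - κ, κ - c⟫ + dist κ c ^ 2 := fun i => by
    simp only [dist_eq_norm]
    rw [← norm_add_sq_real, sub_add_sub_cancel]
  simp only [expand, Finset.sum_add_distrib, ← Finset.mul_sum, ← sum_inner,
    sum_sub_barycenter_eq_zero hκ, inner_zero_left, mul_zero, add_zero, Finset.sum_const,
    Finset.card_univ, nsmul_eq_mul]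

theorem sum_dist_barycenter_sq_le (hκ : (Fintype.card ι : ℝ) • κ = ∑ i, v i) (c : E) :
    ∑ i, dist (v i) κ ^ 2 ≤ ∑ i, dist (v i) c ^ 2 := by
  rw [sum_dist_sq_eq_sum_dist_barycenter_sq_add hκ c]
  exact le_add_of_nonneg_right (by positivity)

theorem le_of_forall_dist_barycenter_eq_of_forall_dist_le [Nonempty ι]
    (hκ : (Fintype.card ι : ℝ) • κ = ∑ i, v i) {R r : ℝ} (hR₀ : 0 ≤ R)
    (hR : ∀ i, dist (v i) κ = R) {c : E} (hc : ∀ i, dist (v i) c ≤ r) : R ≤ r := by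
  have hr₀ : 0 ≤ r := dist_nonneg.trans (hc (Classical.arbitrary ι))
  have hsq : Fintype.card ι * R ^ 2 ≤ Fintype.card ι * r ^ 2 := calc
    Fintype.card ι * R ^ 2 = ∑ i, dist (v i) κ ^ 2 := by simp [hR]
    _ ≤ ∑ i, dist (v i) c ^ 2 := sum_dist_barycenter_sq_le hκ c
    _ ≤ ∑ _i : ι, r ^ 2 := Finset.sum_le_sum fun i _ => by gcongr; exact hc i
    _ = Fintype.card ι * r ^ 2 := by simp
  rw [mul_le_mul_iff_right₀ (by exact_mod_cast Fintype.card_pos)] at hsq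
  exact (pow_le_pow_iff_left₀ hR₀ hr₀ two_ne_zero).1 hsq

end Barycenter

theorem sum_dist_sq_of_pairwise_dist_eq {ι X : Type*} [Fintype ι] [PseudoMetricSpace X]
    {v : ι → X} {ℓ : ℝ} (hreg : ∀ i j, i ≠ j → dist (v i) (v j) = ℓ) (j : ι) :
    ∑ i, dist (v i) (v j) ^ 2 = (Fintype.card ι - 1) * ℓ ^ 2 := by
  classical
  have h : ∀ i, dist (v i) (v j) ^ 2 = ℓ ^ 2 - if i = j then ℓ ^ 2 else 0 := fun i => by
    by_cases hij : i = j
    · simp [hij]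
    · simp [hij, hreg i j hij]
  simp only [h, Finset.sum_sub_distrib, Finset.sum_ite_eq', Finset.mem_univ, if_true,
    Finset.sum_const, Finset.card_univ, nsmul_eq_mul]
  ring

section RegularSimplex

variable {ι E : Type*} [Fintype ι] [NormedAddCommGroup E] [InnerProductSpace ℝ E]
  {v : ι → E} {ℓ : ℝ}

theorem two_mul_card_mul_dist_barycenter_sq (hreg : ∀ i j, i ≠ j → dist (v i) (v j) = ℓ)
    {κ : E} (hκ : (Fintype.card ι : ℝ) • κ = ∑ i, v i) (j : ι) :
    2 * Fintype.card ι * dist (v j) κ ^ 2 = (Fintype.card ι - 1) * ℓ ^ 2 := by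
  have : Nonempty ι := ⟨j⟩
  set n : ℝ := (Fintype.card ι : ℝ)
  set S := ∑ i, dist (v i) κ ^ 2
  have hvertex : ∀ k, (n - 1) * ℓ ^ 2 = S + n * dist (v k) κ ^ 2 := fun k => by
    rw [← sum_dist_sq_of_pairwise_dist_eq hreg k, dist_comm (v k),
      sum_dist_sq_eq_sum_dist_barycenter_sq_add hκ]
  have htotal : n * ((n - 1) * ℓ ^ 2) = 2 * n * S := by
    have := Finset.sum_congr rfl fun k (_ : k ∈ Finset.univ) => hvertex k
    simp only [Finset.sum_const, Finset.card_univ, nsmul_eq_mul, Finset.sum_add_distrib,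
      ← Finset.mul_sum] at this
    linear_combination this
  have hn : n ≠ 0 := Nat.cast_ne_zero.2 Fintype.card_ne_zero
  refine mul_left_cancel₀ hn ?_
  linear_combination htotal - 2 * n * hvertex j

theorem dist_barycenter_of_pairwise_dist_eq (hreg : ∀ i j, i ≠ j → dist (v i) (v j) = ℓ)
    (hℓ : 0 ≤ ℓ) {κ : E} (hκ : (Fintype.card ι : ℝ) • κ = ∑ i, v i) (j : ι) :
    dist (v j) κ = √((Fintype.card ι - 1) / (2 * Fintype.card ι)) * ℓ := by
  have : Nonempty ι := ⟨j⟩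
  have hn : (Fintype.card ι : ℝ) ≠ 0 := Nat.cast_ne_zero.2 Fintype.card_ne_zero
  rw [← Real.sqrt_sq hℓ, ← Real.sqrt_mul' _ (sq_nonneg ℓ), ← Real.sqrt_sq dist_nonneg]
  congr 1
  rw [div_mul_eq_mul_div, ← two_mul_card_mul_dist_barycenter_sq hreg hκ j]
  field_simp

end RegularSimplex

theorem circumradius_regular_simplex_general (d : ℕ) (ℓ : ℝ) (hℓ : 0 < ℓ)
    (v : Fin (d + 1) → EuclideanSpace ℝ (Fin d))
    (hreg : ∀ i j, i ≠ j → dist (v i) (v j) = ℓ)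
    (κ : EuclideanSpace ℝ (Fin d))
    (hκ : κ = (1 / ((d : ℝ) + 1)) • ∑ i, v i) :
    (∀ i, dist κ (v i) = Real.sqrt ((d : ℝ) / (2 * ((d : ℝ) + 1))) * ℓ) ∧
    convexHull ℝ (Set.range v) ⊆
      Metric.closedBall κ (Real.sqrt ((d : ℝ) / (2 * ((d : ℝ) + 1))) * ℓ) ∧
    (∀ (c : EuclideanSpace ℝ (Fin d)) (r : ℝ),
      (∀ i, v i ∈ Metric.closedBall c r) →
        Real.sqrt ((d : ℝ) / (2 * ((d : ℝ) + 1))) * ℓ ≤ r) := by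
  have hbary : (Fintype.card (Fin (d + 1)) : ℝ) • κ = ∑ i, v i := by
    rw [hκ, smul_smul, Fintype.card_fin, Nat.cast_succ, mul_one_div_cancel (by positivity),
      one_smul]
  have hdist : ∀ i, dist (v i) κ = Real.sqrt ((d : ℝ) / (2 * ((d : ℝ) + 1))) * ℓ := fun i => by
    rw [dist_barycenter_of_pairwise_dist_eq hreg hℓ.le hbary i, Fintype.card_fin,
      Nat.cast_succ, add_sub_cancel_right]
  refine ⟨fun i => dist_comm κ (v i) ▸ hdist i, ?_, fun c r hc => ?_⟩
  · refine convexHull_min ?_ (convex_closedBall _ _)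
    rintro _ ⟨i, rfl⟩
    exact Metric.mem_closedBall.2 (hdist i).le
  · exact le_of_forall_dist_barycenter_eq_of_forall_dist_le hbary (by positivity) hdist
      fun i => Metric.mem_closedBall.1 (hc i)

/-- **Circumradius of regular simplices.** For a regular `d`-simplex with edge
length `ℓ` and barycenter `κ`, every vertex is at distance
`sqrt (d/(2*(d+1))) * ℓ` from `κ`, the simplex is contained in the closed ball
about `κ` of that radius, and no closed ball of smaller radius contains all the
vertices. -/
theorem circumradius_regular_simplex (d : ℕ) (hd : 1 ≤ d) (ℓ : ℝ) (hℓ : 0 < ℓ)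
    (v : Fin (d + 1) → EuclideanSpace ℝ (Fin d))
    (hai : AffineIndependent ℝ v)
    (hreg : ∀ i j, i ≠ j → dist (v i) (v j) = ℓ)
    (κ : EuclideanSpace ℝ (Fin d))
    (hκ : κ = (1 / ((d : ℝ) + 1)) • ∑ i, v i) :
    (∀ i, dist κ (v i) = Real.sqrt ((d : ℝ) / (2 * ((d : ℝ) + 1))) * ℓ) ∧
    convexHull ℝ (Set.range v) ⊆
      Metric.closedBall κ (Real.sqrt ((d : ℝ) / (2 * ((d : ℝ) + 1))) * ℓ) ∧
    (∀ (c : EuclideanSpace ℝ (Fin d)) (r : ℝ),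
      (∀ i, v i ∈ Metric.closedBall c r) →
        Real.sqrt ((d : ℝ) / (2 * ((d : ℝ) + 1))) * ℓ ≤ r) :=
  circumradius_regular_simplex_general d ℓ hℓ v hreg κ hκ
end

section
/- Inradius of regular simplices: Let d ≥ 1 and let v : Fin (d+1) → EuclideanSpace ℝ (Fin d) be the vertices of a regular d-simplex with common edge length ℓ > 0, and let κ = (1/(d+1)) • ∑ i, v i be its barycenter. Then (i) the closed ball centered at κ of radius ℓ / sqrt(2*d*(d+1)) is contained in the convex hull of the vertices, and (ii) every closed ball contained in that convex hull has radius at most ℓ / sqrt(2*d*(d+1)). Hence the inradius of the regular d-simplex coincides with its barycentric inradius and equals ℓ / sqrt(2*d*(d+1)). -/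
open scoped RealInnerProductSpace

set_option maxHeartbeats 1000000 in
/-- **Inradius of regular simplices.** For a regular `d`-simplex with edge
length `ℓ` and barycenter `κ`, the closed ball about `κ` of radius
`ℓ / sqrt (2*d*(d+1))` is contained in the simplex, and every closed ball
contained in the simplex has radius at most `ℓ / sqrt (2*d*(d+1))`. -/
theorem inradius_regular_simplex (d : ℕ) (hd : 1 ≤ d) (ℓ : ℝ) (hℓ : 0 < ℓ)
    (v : Fin (d + 1) → EuclideanSpace ℝ (Fin d))
    (hai : AffineIndependent ℝ v)
    (hreg : ∀ i j, i ≠ j → dist (v i) (v j) = ℓ)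
    (κ : EuclideanSpace ℝ (Fin d))
    (hκ : κ = (1 / ((d : ℝ) + 1)) • ∑ i, v i) :
    Metric.closedBall κ (ℓ / Real.sqrt (2 * (d : ℝ) * ((d : ℝ) + 1))) ⊆
      convexHull ℝ (Set.range v) ∧
    (∀ (c : EuclideanSpace ℝ (Fin d)) (r : ℝ),
      Metric.closedBall c r ⊆ convexHull ℝ (Set.range v) →
        r ≤ ℓ / Real.sqrt (2 * (d : ℝ) * ((d : ℝ) + 1))) := by
  classical
  have hd0 : (0:ℝ) < d := by exact_mod_cast hd
  set D : ℝ := (d : ℝ) + 1 with hDdef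
  have hD0 : (0:ℝ) < D := by positivity
  set r : ℝ := ℓ / Real.sqrt (2 * (d:ℝ) * D) with hrdef
  set u : Fin (d+1) → EuclideanSpace ℝ (Fin d) := fun i => v i - κ with hudef
  have hvu : ∀ i, v i = κ + u i := fun i => by simp [hudef]
  have husum : ∑ i, u i = 0 := by
    have h1 : ∑ i, u i = (∑ i, v i) - D • κ := by
      rw [Finset.sum_sub_distrib, Finset.sum_const, Finset.card_univ, Fintype.card_fin,
        ← Nat.cast_smul_eq_nsmul ℝ]
      push_cast
      rw [hDdef]
    rw [h1, hκ, smul_smul, mul_one_div, div_self hD0.ne', one_smul, sub_self]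
  have hdistu : ∀ i j, i ≠ j → ‖u i - u j‖ = ℓ := by
    intro i j hij
    have : u i - u j = v i - v j := by simp [hudef]
    rw [this, ← dist_eq_norm]
    exact hreg i j hij
  set c : ℝ := ℓ^2 / (2*D) with hcdef
  have hc0 : 0 < c := by positivity
  have hinner_ne : ∀ i j, i ≠ j → ⟪u i, u j⟫ = (‖u i‖^2 + ‖u j‖^2 - ℓ^2)/2 := by
    intro i j hij
    have h2 : ‖u i - u j‖^2 = ‖u i‖^2 - 2*⟪u i, u j⟫ + ‖u j‖^2 := norm_sub_sq_real _ _
    rw [hdistu i j hij] at h2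
    linarith
  have hrow : ∀ i, ∑ j, ⟪u i, u j⟫ = 0 := by
    intro i
    rw [← inner_sum, husum, inner_zero_right]
  set T : ℝ := ∑ i, ‖u i‖^2 with hTdef
  have hkey : ∀ i, D * ‖u i‖^2 = (d:ℝ)*ℓ^2 - T := by
    intro i
    have h0 := hrow i
    rw [← Finset.add_sum_erase _ _ (Finset.mem_univ i)] at h0
    have hTsplit : ∑ j ∈ Finset.univ.erase i, ‖u j‖^2 = T - ‖u i‖^2 := by
      rw [hTdef, ← Finset.add_sum_erase _ (fun j => ‖u j‖^2) (Finset.mem_univ i)]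
      ring
    have hcard : (Finset.univ.erase i).card = d := by
      rw [Finset.card_erase_of_mem (Finset.mem_univ i), Finset.card_univ, Fintype.card_fin]
      omega
    have h1 : ∑ j ∈ Finset.univ.erase i, ⟪u i, u j⟫
        = (d:ℝ)*(‖u i‖^2 - ℓ^2)/2 + (T - ‖u i‖^2)/2 := by
      rw [Finset.sum_congr rfl
        (fun j hj => hinner_ne i j (Ne.symm (Finset.ne_of_mem_erase hj)))]
      rw [Finset.sum_congr rfl
        (fun j _ => show (‖u i‖^2 + ‖u j‖^2 - ℓ^2)/2 = (‖u i‖^2 - ℓ^2)/2 + ‖u j‖^2/2 by ring)]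
      rw [Finset.sum_add_distrib, Finset.sum_const, hcard, ← Finset.sum_div, hTsplit,
        nsmul_eq_mul]
      ring
    rw [h1, real_inner_self_eq_norm_sq] at h0
    rw [hDdef]
    linarith
  have hT : T = (d:ℝ)*ℓ^2/2 := by
    have h1 : D * T = D * ((d:ℝ)*ℓ^2 - T) := by
      have h2 : D * T = ∑ i, D * ‖u i‖^2 := by rw [← Finset.mul_sum]
      rw [h2, Finset.sum_congr rfl (fun i _ => hkey i), Finset.sum_const, Finset.card_univ,
        Fintype.card_fin, nsmul_eq_mul, hDdef]
      push_cast
      ring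
    have h3 := mul_left_cancel₀ hD0.ne' h1
    linarith
  have hA : ∀ i, ‖u i‖^2 = (d:ℝ) * c := by
    intro i
    have h1 := hkey i
    rw [hT] at h1
    rw [hcdef]
    field_simp
    linear_combination 2*h1
  have hGram : ∀ i j, ⟪u i, u j⟫ = if i = j then (d:ℝ)*c else -c := by
    intro i j
    by_cases h : i = j
    · subst h
      rw [if_pos rfl, real_inner_self_eq_norm_sq, hA]
    · rw [if_neg h, hinner_ne i j h, hA, hA, hcdef]
      field_simp
      ring
  have hu0 : ∀ i, 0 < ‖u i‖ := by
    intro i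
    rcases (norm_nonneg (u i)).lt_or_eq with h | h
    · exact h
    · exfalso
      have := hA i
      rw [← h] at this
      nlinarith
  have hsq : Real.sqrt (2*(d:ℝ)*D) ^ 2 = 2*(d:ℝ)*D := Real.sq_sqrt (by positivity)
  have hr0 : 0 < r := by
    rw [hrdef]
    have : 0 < Real.sqrt (2*(d:ℝ)*D) := Real.sqrt_pos.mpr (by positivity)
    positivity
  have hrc : ∀ i, r * ‖u i‖ = c := by
    intro i
    have h2 : (r * ‖u i‖)^2 = c^2 := by
      rw [mul_pow, hrdef, div_pow, hsq, hA i, hcdef]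
      field_simp
    nlinarith [mul_pos hr0 (hu0 i), hc0]
  clear_value T
  clear_value c
  clear_value r
  clear_value u
  -- spanning
  have hvspan : vectorSpan ℝ (Set.range v) = ⊤ := by
    have hcard : Fintype.card (Fin (d+1)) = Module.finrank ℝ (EuclideanSpace ℝ (Fin d)) + 1 := by
      simp [finrank_euclideanSpace_fin]
    have htop : affineSpan ℝ (Set.range v) = ⊤ :=
      hai.affineSpan_eq_top_iff_card_eq_finrank_add_one.mpr hcard
    rw [← direction_affineSpan, htop, AffineSubspace.direction_top]
  have hspan : Submodule.span ℝ (Set.range u) = ⊤ := by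
    apply le_antisymm le_top
    rw [← hvspan, vectorSpan_def]
    apply Submodule.span_le.mpr
    rintro x ⟨p, ⟨i, rfl⟩, q, ⟨j, rfl⟩, rfl⟩
    show v i -ᵥ v j ∈ (Submodule.span ℝ (Set.range u) : Set (EuclideanSpace ℝ (Fin d)))
    have hvv : v i -ᵥ v j = u i - u j := by simp [hudef]
    rw [hvv]
    exact sub_mem (Submodule.subset_span ⟨i, rfl⟩) (Submodule.subset_span ⟨j, rfl⟩)
  have hgen : ∀ j, ∑ i, ⟪u i, u j⟫ • u i = (D*c) • u j := by
    intro j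
    have hterm : ∀ i, ⟪u i, u j⟫ • u i
        = (-c) • u i + (if i = j then (D*c) • u j else 0) := by
      intro i
      rw [hGram]
      by_cases h : i = j
      · subst h
        rw [if_pos rfl, if_pos rfl, ← add_smul]
        congr 1
        rw [hDdef]; ring
      · rw [if_neg h, if_neg h, add_zero, neg_smul]
    rw [Finset.sum_congr rfl (fun i _ => hterm i), Finset.sum_add_distrib,
      ← Finset.smul_sum, husum, smul_zero, zero_add, Finset.sum_ite_eq' Finset.univ j,
      if_pos (Finset.mem_univ j)]
  have hrecon : ∀ y, ∑ i, ⟪u i, y⟫ • u i = (D * c) • y := by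
    intro y
    have hy : y ∈ Submodule.span ℝ (Set.range u) := hspan ▸ Submodule.mem_top
    induction hy using Submodule.span_induction with
    | mem x hx =>
      obtain ⟨j, rfl⟩ := hx
      exact hgen j
    | zero => simp
    | add x y hx hy ihx ihy =>
      have : ∀ i, ⟪u i, x + y⟫ • u i = ⟪u i, x⟫ • u i + ⟪u i, y⟫ • u i := by
        intro i; rw [inner_add_right, add_smul]
      rw [Finset.sum_congr rfl (fun i _ => this i), Finset.sum_add_distrib, ihx, ihy, smul_add]
    | smul a x hx ihx =>
      have : ∀ i, ⟪u i, a • x⟫ • u i = a • (⟪u i, x⟫ • u i) := by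
        intro i; rw [real_inner_smul_right, mul_smul]
      rw [Finset.sum_congr rfl (fun i _ => this i), ← Finset.smul_sum, ihx, smul_comm]
  constructor
  · -- the ball is inside the simplex
    intro x hx
    have hxr : ‖x - κ‖ ≤ r := by
      rw [← dist_eq_norm]
      exact Metric.mem_closedBall.mp hx
    set y := x - κ with hy
    clear_value y
    set w : Fin (d+1) → ℝ := fun i => 1/D + ⟪u i, y⟫ / (D*c) with hw
    clear_value w
    have hDc : 0 < D * c := by positivity
    have hw1 : ∑ i, w i = 1 := by
      have h2 : ∑ i : Fin (d+1), ⟪u i, y⟫ / (D*c) = 0 := by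
        rw [← Finset.sum_div, ← sum_inner, husum, inner_zero_left, zero_div]
      have h1 : ∑ _i : Fin (d+1), (1:ℝ)/D = 1 := by
        rw [Finset.sum_const, Finset.card_univ, Fintype.card_fin, nsmul_eq_mul]
        push_cast
        rw [← hDdef, mul_one_div, div_self hD0.ne']
      simp only [hw]
      rw [Finset.sum_add_distrib, h1, h2, add_zero]
    have hw0 : ∀ i, 0 ≤ w i := by
      intro i
      have h1 : -(‖u i‖ * ‖y‖) ≤ ⟪u i, y⟫ := by
        have h2 := abs_real_inner_le_norm (u i) y
        have h3 := neg_abs_le ⟪u i, y⟫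
        linarith
      have h2 : ‖u i‖ * ‖y‖ ≤ c := by
        calc ‖u i‖ * ‖y‖ ≤ ‖u i‖ * r := by
              exact mul_le_mul_of_nonneg_left hxr (norm_nonneg _)
          _ = c := by rw [mul_comm]; exact hrc i
      have h3 : D*c*(w i) = c + ⟪u i, y⟫ := by
        rw [hw]
        field_simp
      have h4 : 0 ≤ D*c*(w i) := by rw [h3]; linarith
      have h5 := div_nonneg h4 hDc.le
      rwa [mul_div_cancel_left₀ _ hDc.ne'] at h5
    have hwv : ∑ i, w i • v i = x := by
      have h4 : ∑ i, w i • v i = ∑ i, (w i • κ + w i • u i) := by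
        refine Finset.sum_congr rfl fun i _ => ?_
        rw [hvu i, smul_add]
      rw [h4, Finset.sum_add_distrib, ← Finset.sum_smul, hw1, one_smul]
      have h5 : ∑ i, w i • u i = y := by
        have hterm : ∀ i, w i • u i = (1/D) • u i + (1/(D*c)) • (⟪u i, y⟫ • u i) := by
          intro i
          rw [hw, add_smul, smul_smul]
          congr 2
          ring
        rw [Finset.sum_congr rfl (fun i _ => hterm i), Finset.sum_add_distrib,
          ← Finset.smul_sum, ← Finset.smul_sum, husum, smul_zero, zero_add, hrecon,
          smul_smul, one_div, inv_mul_cancel₀ hDc.ne', one_smul]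
      rw [h5, hy]
      abel
    have hmem := Finset.centerMass_mem_convexHull (Finset.univ) (fun i _ => hw0 i)
      (by rw [hw1]; norm_num) (fun i _ => Set.mem_range_self (f := v) i)
    rwa [Finset.centerMass_eq_of_sum_1 _ _ hw1, hwv] at hmem
  · -- every inscribed ball has radius ≤ r
    intro c0 r0 hsub
    rcases le_or_gt r0 0 with h | h
    · exact h.trans hr0.le
    have hhalf : ∀ i, ∀ x ∈ convexHull ℝ (Set.range v), -c ≤ ⟪u i, x - κ⟫ := by
      intro i x hx
      have hconv : Convex ℝ {x : EuclideanSpace ℝ (Fin d) | -c ≤ ⟪u i, x - κ⟫} := by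
        intro p hp q hq a b ha hb hab
        simp only [Set.mem_setOf_eq] at hp hq ⊢
        have hk : a • p + b • q - κ = a • (p - κ) + b • (q - κ) := by
          have hk2 : a • κ + b • κ = κ := by rw [← add_smul, hab, one_smul]
          nth_rewrite 1 [← hk2]
          rw [smul_sub, smul_sub]
          abel
        rw [hk, inner_add_right, real_inner_smul_right, real_inner_smul_right]
        nlinarith [mul_le_mul_of_nonneg_left hp ha, mul_le_mul_of_nonneg_left hq hb]
      have hsub2 : convexHull ℝ (Set.range v) ⊆ {x | -c ≤ ⟪u i, x - κ⟫} := by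
        apply convexHull_min ?_ hconv
        rintro _ ⟨j, rfl⟩
        simp only [Set.mem_setOf_eq]
        have : v j - κ = u j := by rw [hudef]
        rw [this, hGram]
        split_ifs
        · nlinarith
        · exact le_rfl
      exact hsub2 hx
    have hex : ∃ i, ⟪u i, c0 - κ⟫ ≤ 0 := by
      by_contra hcon
      push_neg at hcon
      have hsum0 : ∑ i, ⟪u i, c0 - κ⟫ = 0 := by
        rw [← sum_inner, husum, inner_zero_left]
      have hpos : 0 < ∑ i, ⟪u i, c0 - κ⟫ :=
        Finset.sum_pos (fun i _ => hcon i) Finset.univ_nonempty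
      linarith
    obtain ⟨i, hi⟩ := hex
    set z := c0 - (r0/‖u i‖) • u i with hz
    clear_value z
    have hzmem : z ∈ Metric.closedBall c0 r0 := by
      rw [Metric.mem_closedBall, dist_eq_norm, hz]
      have h1 : c0 - (r0/‖u i‖) • u i - c0 = -((r0/‖u i‖) • u i) := by abel
      rw [h1, norm_neg, norm_smul, Real.norm_eq_abs,
        abs_of_nonneg (le_of_lt (div_pos h (hu0 i))), div_mul_cancel₀ _ (hu0 i).ne']
    have hz2 := hhalf i z (hsub hzmem)
    have hcalc : ⟪u i, z - κ⟫ = ⟪u i, c0 - κ⟫ - r0 * ‖u i‖ := by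
      rw [hz]
      have h1 : c0 - (r0/‖u i‖) • u i - κ = (c0 - κ) - (r0/‖u i‖) • u i := by abel
      rw [h1, inner_sub_right, real_inner_smul_right, real_inner_self_eq_norm_sq]
      congr 1
      field_simp [(hu0 i).ne']
    have h6 : r0 * ‖u i‖ ≤ c := by
      rw [hcalc] at hz2
      linarith
    have hru := hrc i
    exact le_of_mul_le_mul_right (by linarith) (hu0 i)
end

section
/- Blumenthal–Wahlin enclosing theorem: Let d ≥ 1, r ≥ 0, and let P be a subset of EuclideanSpace ℝ (Fin d). If every subset S of P with at most d+1 elements is contained in some closed ball of radius r, then P itself is contained in some closed ball of radius r. -/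
/-- **Blumenthal–Wahlin enclosing theorem.** If every subset of `P ⊆ ℝ^d` with
at most `d+1` elements is enclosable by a closed ball of radius `r`, then `P`
itself is enclosable by a closed ball of radius `r`. -/
theorem blumenthal_wahlin (d : ℕ) (hd : 1 ≤ d) (r : ℝ) (hr : 0 ≤ r)
    (P : Set (EuclideanSpace ℝ (Fin d)))
    (h : ∀ S : Finset (EuclideanSpace ℝ (Fin d)), ↑S ⊆ P → S.card ≤ d + 1 →
      ∃ c : EuclideanSpace ℝ (Fin d), ↑S ⊆ Metric.closedBall c r) :
    ∃ c : EuclideanSpace ℝ (Fin d), P ⊆ Metric.closedBall c r := by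
  classical
  have key : (⋂ p : P, Metric.closedBall (p : EuclideanSpace ℝ (Fin d)) r).Nonempty := by
    apply Convex.helly_theorem_compact' (𝕜 := ℝ)
      (fun i => convex_closedBall _ _) (fun i => isCompact_closedBall _ _)
    intro I hI
    have hrank : Module.finrank ℝ (EuclideanSpace ℝ (Fin d)) = d := by
      simp [finrank_euclideanSpace]
    rw [hrank] at hI
    obtain ⟨c, hc⟩ := h (I.image Subtype.val) (by
        intro x hx
        rw [Finset.coe_image] at hx
        obtain ⟨p, _, rfl⟩ := hx
        exact p.2)
      (le_trans (Finset.card_image_le) hI)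
    refine ⟨c, ?_⟩
    simp only [Set.mem_iInter]
    intro p hp
    have : (p : EuclideanSpace ℝ (Fin d)) ∈ Metric.closedBall c r := by
      apply hc
      simp only [Finset.coe_image, Set.mem_image, Finset.mem_coe]
      exact ⟨p, hp, rfl⟩
    rw [Metric.mem_closedBall] at this ⊢
    rwa [dist_comm]
  obtain ⟨c, hc⟩ := key
  refine ⟨c, fun p hp => ?_⟩
  have := Set.mem_iInter.mp hc ⟨p, hp⟩
  rw [Metric.mem_closedBall] at this ⊢
  rwa [dist_comm]
end

section
/- Generalization of Apollonius' theorem: Let 1 ≤ m ≤ d and let v : Fin (m+1) → EuclideanSpace ℝ (Fin d) be affinely independent (an m-simplex). For each i let κᵢ = (1/m) • ∑_{j ≠ i} v j, let E_i = ∑_{j ≠ i} ‖v i − v j‖², and let F_i = ∑_{p < q, p ≠ i, q ≠ i} ‖v p − v q‖². Then for every i: ‖v i − κᵢ‖² = (m * E_i − F_i) / m². -/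
lemma swap_lt {α : Type*} [LinearOrder α] (S : Finset α) (f : α → α → ℝ) :
    ∑ p ∈ S, ∑ q ∈ S.filter (fun q => p < q), f p q
      = ∑ p ∈ S, ∑ q ∈ S.filter (fun q => q < p), f q p := by
  simp_rw [Finset.sum_filter]
  rw [Finset.sum_comm]

lemma filter_lt_erase {α : Type*} [LinearOrder α] [DecidableEq α] (S : Finset α) (p : α) :
    (S.erase p).filter (fun q => q < p) = S.filter (fun q => q < p) := by
  ext x
  simp only [Finset.mem_filter, Finset.mem_erase]
  exact ⟨fun h => ⟨h.1.2, h.2⟩, fun h => ⟨⟨ne_of_lt h.2, h.1⟩, h.2⟩⟩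

lemma filter_not_lt_erase {α : Type*} [LinearOrder α] [DecidableEq α] (S : Finset α) (p : α) :
    (S.erase p).filter (fun q => ¬ q < p) = S.filter (fun q => p < q) := by
  ext x
  simp only [Finset.mem_filter, Finset.mem_erase]
  constructor
  · rintro ⟨⟨hne, hx⟩, h⟩
    exact ⟨hx, (not_lt.1 h).lt_of_ne (Ne.symm hne)⟩
  · rintro ⟨hx, h⟩
    exact ⟨⟨ne_of_gt h, hx⟩, not_lt.2 h.le⟩

lemma key {α : Type*} [LinearOrder α] [DecidableEq α] (S : Finset α) (g : α → α → ℝ)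
    (hsym : ∀ p q, g p q = g q p) :
    ∑ p ∈ S, ∑ q ∈ S, g p q =
      (S.card : ℝ) * ∑ p ∈ S, g p p -
        ∑ p ∈ S, ∑ q ∈ S.filter (fun q => p < q), (g p p + g q q - 2 * g p q) := by
  have split : ∀ p ∈ S, ∑ q ∈ S, g p q =
      g p p + (∑ q ∈ S.filter (fun q => q < p), g p q
        + ∑ q ∈ S.filter (fun q => p < q), g p q) := by
    intro p hp
    rw [← Finset.add_sum_erase S _ hp, ← Finset.sum_filter_add_sum_filter_not (S.erase p)
      (fun q => q < p), filter_lt_erase, filter_not_lt_erase]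
  rw [Finset.sum_congr rfl split]
  have hswap1 : ∑ p ∈ S, ∑ q ∈ S.filter (fun q => q < p), g p q
      = ∑ p ∈ S, ∑ q ∈ S.filter (fun q => p < q), g p q := by
    rw [swap_lt S (fun p q => g p q)]
    exact Finset.sum_congr rfl fun p _ => Finset.sum_congr rfl fun q _ => (hsym q p).symm
  -- expand F
  have hF : ∑ p ∈ S, ∑ q ∈ S.filter (fun q => p < q), (g p p + g q q - 2 * g p q)
      = ((S.card : ℝ) - 1) * ∑ p ∈ S, g p p
        - 2 * ∑ p ∈ S, ∑ q ∈ S.filter (fun q => p < q), g p q := by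
    have e1 : ∀ p ∈ S, ∑ q ∈ S.filter (fun q => p < q), (g p p + g q q - 2 * g p q)
        = ((S.filter (fun q => p < q)).card : ℝ) * g p p
          + ∑ q ∈ S.filter (fun q => p < q), g q q
          - 2 * ∑ q ∈ S.filter (fun q => p < q), g p q := by
      intro p hp
      rw [Finset.sum_sub_distrib, Finset.sum_add_distrib, Finset.sum_const,
        Finset.mul_sum, nsmul_eq_mul]
    rw [Finset.sum_congr rfl e1]
    have e2 : ∑ p ∈ S, ∑ q ∈ S.filter (fun q => p < q), g q q
        = ∑ p ∈ S, ((S.filter (fun q => q < p)).card : ℝ) * g p p := by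
      rw [swap_lt S (fun p q => g q q)]
      exact Finset.sum_congr rfl fun p _ => by
        rw [Finset.sum_const, nsmul_eq_mul]
    simp_rw [Finset.sum_sub_distrib, Finset.sum_add_distrib, e2, ← Finset.sum_add_distrib,
      ← add_mul, ← Finset.mul_sum]
    have e3 : ∀ p ∈ S, (((S.filter (fun q => p < q)).card : ℝ)
        + ((S.filter (fun q => q < p)).card : ℝ)) * g p p = ((S.card : ℝ) - 1) * g p p := by
      intro p hp
      congr 1
      have hd : Disjoint (S.filter (fun q => p < q)) (S.filter (fun q => q < p)) := by
        rw [Finset.disjoint_filter]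
        intro x _ h1 h2
        exact absurd h2 (not_lt.2 h1.le)
      have hu : S.filter (fun q => p < q) ∪ S.filter (fun q => q < p) = S.erase p := by
        rw [← filter_not_lt_erase, ← filter_lt_erase, Finset.union_comm,
          Finset.filter_union_filter_not_eq]
      have := Finset.card_union_of_disjoint hd
      rw [hu, Finset.card_erase_of_mem hp] at this
      have h1 : 1 ≤ S.card := Finset.card_pos.2 ⟨p, hp⟩
      have h2 : (S.filter (fun q => p < q)).card + (S.filter (fun q => q < p)).card + 1
          = S.card := by omega
      have := congrArg (fun n : ℕ => (n : ℝ)) h2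
      push_cast at this
      linarith
    rw [Finset.sum_congr rfl e3, ← Finset.mul_sum]
  rw [hF, Finset.sum_add_distrib, Finset.sum_add_distrib, hswap1]
  ring


/-- **Generalization of Apollonius' theorem.** For an `m`-simplex with vertices
`v`, face barycenters `κᵢ = (1/m) • ∑_{j ≠ i} v j`, `Eᵢ` the sum of squared
lengths of the edges at `v i`, and `Fᵢ` the sum of squared lengths of the edges
of the opposite face, the median length satisfies
`‖v i − κᵢ‖² = (m·Eᵢ − Fᵢ)/m²`. -/
theorem apollonius_simplex (d m : ℕ) (hm : 1 ≤ m) (hmd : m ≤ d)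
    (v : Fin (m + 1) → EuclideanSpace ℝ (Fin d))
    (hai : AffineIndependent ℝ v) :
    ∀ i : Fin (m + 1),
      ‖v i - (1 / (m : ℝ)) • ∑ t ∈ Finset.univ.erase i, v t‖ ^ 2 =
        ((m : ℝ) * (∑ j ∈ Finset.univ.erase i, ‖v i - v j‖ ^ 2) -
          ∑ p ∈ Finset.univ.erase i,
            ∑ q ∈ (Finset.univ.erase i).filter (fun q => p < q), ‖v p - v q‖ ^ 2) /
        (m : ℝ) ^ 2 := by
  intro i
  have hm0 : (m : ℝ) ≠ 0 := Nat.cast_ne_zero.2 (by omega)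
  set S := Finset.univ.erase i with hS
  have hcard : S.card = m := by
    simp [hS, Finset.card_erase_of_mem]
  set g : Fin (m + 1) → Fin (m + 1) → ℝ :=
    fun p q => inner (𝕜 := ℝ) (v i - v p) (v i - v q) with hg
  have hsym : ∀ p q, g p q = g q p := fun p q => real_inner_comm _ _
  have h1 : v i - (1 / (m : ℝ)) • ∑ t ∈ S, v t = (1 / (m : ℝ)) • ∑ t ∈ S, (v i - v t) := by
    rw [Finset.sum_sub_distrib, Finset.sum_const, hcard, smul_sub,
      ← Nat.cast_smul_eq_nsmul ℝ, smul_smul]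
    rw [one_div, inv_mul_cancel₀ hm0, one_smul]
  rw [h1, norm_smul, mul_pow]
  have h2 : ‖∑ t ∈ S, (v i - v t)‖ ^ 2 = ∑ p ∈ S, ∑ q ∈ S, g p q := by
    rw [← real_inner_self_eq_norm_sq, sum_inner]
    exact Finset.sum_congr rfl fun p _ => inner_sum _ _ _
  have hE : ∀ j, ‖v i - v j‖ ^ 2 = g j j := fun j => (real_inner_self_eq_norm_sq _).symm
  have hF : ∀ p q : Fin (m + 1), ‖v p - v q‖ ^ 2 = g p p + g q q - 2 * g p q := by
    intro p q
    have : v p - v q = (v i - v q) - (v i - v p) := by abel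
    rw [this, norm_sub_sq_real, real_inner_comm, hE p, hE q]
    ring
  rw [h2, key S g hsym, hcard]
  simp_rw [hE, hF]
  rw [Real.norm_eq_abs, abs_of_pos (by positivity : (0:ℝ) < 1 / m)]
  field_simp
end

section
/- Medians sum property: Let 1 ≤ m ≤ d and let v : Fin (m+1) → EuclideanSpace ℝ (Fin d) be affinely independent (an m-simplex). For each i let κᵢ = (1/m) • ∑_{j ≠ i} v j, and let E = ∑_{p < q} ‖v p − v q‖². Then ∑ i, ‖v i − κᵢ‖² = ((m+1) / m²) * E. -/
/-! With `n = m + 1` vertices, the median vector `v i - κᵢ` is `(1/m) • ∑ j, (v i - v j)`.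
Expanding squared norms into inner products, `∑ i, ‖∑ j, (v i - v j)‖²` and
`∑ i, ∑ j, ‖v i - v j‖²` are `n` resp. `2` times `n ∑ i, ‖v i‖² - ‖∑ i, v i‖²`, and the
latter double sum is `2E`. -/

open Finset

theorem Finset.sum_sum_eq_two_mul_sum_sum_lt {ι R : Type*} [Fintype ι] [LinearOrder ι]
    [CommSemiring R] (f : ι → ι → R)
    (hsymm : ∀ i j, f i j = f j i) (hdiag : ∀ i, f i i = 0) :
    ∑ i, ∑ j, f i j = 2 * ∑ i, ∑ j ∈ univ.filter (fun j => i < j), f i j := by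
  have hsplit : ∀ i j, f i j = (if i < j then f i j else 0) + (if j < i then f j i else 0) := by
    intro i j
    rcases lt_trichotomy i j with h | rfl | h
    · simp [h, h.not_gt]
    · simp [hdiag]
    · simp [h, h.not_gt, hsymm i j]
  have hlower : ∑ i, ∑ j, (if j < i then f j i else 0) = ∑ i, ∑ j, (if i < j then f i j else 0) :=
    sum_comm
  calc ∑ i, ∑ j, f i j
      = ∑ i, ∑ j, (if i < j then f i j else 0) + ∑ i, ∑ j, (if j < i then f j i else 0) := by
        simp only [← sum_add_distrib, ← hsplit]
    _ = 2 * ∑ i, ∑ j ∈ univ.filter (fun j => i < j), f i j := by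
        rw [hlower, ← two_mul]
        simp only [sum_filter]

section InnerProductSpace

variable {E : Type*} [NormedAddCommGroup E] [InnerProductSpace ℝ E] {ι : Type*} [Fintype ι]

theorem sum_sum_norm_sub_sq (v : ι → E) :
    ∑ i, ∑ j, ‖v i - v j‖ ^ 2 = 2 * (Fintype.card ι * ∑ i, ‖v i‖ ^ 2 - ‖∑ i, v i‖ ^ 2) := by
  simp_rw [norm_sub_sq_real, sum_add_distrib, sum_sub_distrib, ← mul_sum, ← inner_sum,
    ← sum_inner, real_inner_self_eq_norm_sq, sum_const, card_univ, nsmul_eq_mul, ← mul_sum]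
  ring

theorem sum_norm_sum_sub_sq (v : ι → E) :
    ∑ i, ‖∑ j, (v i - v j)‖ ^ 2 = Fintype.card ι / 2 * ∑ i, ∑ j, ‖v i - v j‖ ^ 2 := by
  rw [sum_sum_norm_sub_sq]
  simp_rw [sum_sub_distrib, sum_const, card_univ, ← Nat.cast_smul_eq_nsmul ℝ, norm_sub_sq_real,
    norm_smul, inner_smul_left, sum_add_distrib, sum_sub_distrib, ← mul_sum, ← sum_inner,
    real_inner_self_eq_norm_sq, sum_const, card_univ, nsmul_eq_mul, Real.norm_natCast, mul_pow,
    conj_trivial, ← mul_sum]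
  ring

end InnerProductSpace

theorem Finset.sum_sub_eq_card_erase_nsmul_sub {ι M : Type*} [Fintype ι] [DecidableEq ι]
    [AddCommGroup M] (v : ι → M) (i : ι) :
    ∑ j, (v i - v j) = #(univ.erase i) • v i - ∑ j ∈ univ.erase i, v j := by
  rw [← sum_erase univ (f := fun j => v i - v j) (sub_self (v i)), sum_sub_distrib, sum_const]

theorem medians_sum_property_general (d m : ℕ) (hm : 1 ≤ m)
    (v : Fin (m + 1) → EuclideanSpace ℝ (Fin d)) :
    ∑ i : Fin (m + 1), ‖v i - (1 / (m : ℝ)) • ∑ t ∈ Finset.univ.erase i, v t‖ ^ 2 =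
      (((m : ℝ) + 1) / (m : ℝ) ^ 2) *
        ∑ p : Fin (m + 1),
          ∑ q ∈ Finset.univ.filter (fun q => p < q), ‖v p - v q‖ ^ 2 := by
  have hm0 : (m : ℝ) ≠ 0 := by positivity
  have hmedian : ∀ i, v i - (1 / (m : ℝ)) • ∑ t ∈ univ.erase i, v t =
      (1 / (m : ℝ)) • ∑ j, (v i - v j) := by
    intro i
    rw [sum_sub_eq_card_erase_nsmul_sub, card_erase_of_mem (mem_univ i), card_univ,
      Fintype.card_fin, add_tsub_cancel_right, ← Nat.cast_smul_eq_nsmul ℝ, smul_sub, smul_smul,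
      one_div_mul_cancel hm0, one_smul]
  calc ∑ i, ‖v i - (1 / (m : ℝ)) • ∑ t ∈ univ.erase i, v t‖ ^ 2
      = (1 / (m : ℝ)) ^ 2 * ∑ i, ‖∑ j, (v i - v j)‖ ^ 2 := by
        simp_rw [hmedian, norm_smul, mul_pow, Real.norm_eq_abs, sq_abs, mul_sum]
    _ = (1 / (m : ℝ)) ^ 2 * (((m : ℝ) + 1) / 2 *
          (2 * ∑ p, ∑ q ∈ univ.filter (fun q => p < q), ‖v p - v q‖ ^ 2)) := by
        rw [sum_norm_sum_sub_sq, Fintype.card_fin, Nat.cast_succ,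
          sum_sum_eq_two_mul_sum_sum_lt _ (fun p q => by rw [norm_sub_rev]) (fun p => by simp)]
    _ = _ := by
        field_simp

/-- **Medians sum property.** For an `m`-simplex with vertices `v` and face
barycenters `κᵢ = (1/m) • ∑_{j ≠ i} v j`, the sum of the squared lengths of the
medians is `((m+1)/m²) · E`, where `E` is the sum of squared edge lengths. -/
theorem medians_sum_property (d m : ℕ) (hm : 1 ≤ m) (hmd : m ≤ d)
    (v : Fin (m + 1) → EuclideanSpace ℝ (Fin d))
    (hai : AffineIndependent ℝ v) :
    ∑ i : Fin (m + 1), ‖v i - (1 / (m : ℝ)) • ∑ t ∈ Finset.univ.erase i, v t‖ ^ 2 =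
      (((m : ℝ) + 1) / (m : ℝ) ^ 2) *
        ∑ p : Fin (m + 1),
          ∑ q ∈ Finset.univ.filter (fun q => p < q), ‖v p - v q‖ ^ 2 :=
  medians_sum_property_general d m hm v
end

section
/- Simplex barycentric enclosing: Let 1 ≤ m ≤ d and let v : Fin (m+1) → EuclideanSpace ℝ (Fin d) be affinely independent (an m-simplex), with barycenter κ = (1/(m+1)) • ∑ i, v i. With E_i = ∑_{j ≠ i} ‖v i − v j‖², F_i = ∑_{p < q, p ≠ i, q ≠ i} ‖v p − v q‖², and β = (1/(m+1)) * max over i of sqrt(m * E_i − F_i), the following hold: (i) β = max over i of dist κ (v i), i.e. β is the barycentric circumradius, and (ii) the convex hull of the vertices is contained in the closed ball centered at κ of radius β. -/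
open Finset
open scoped RealInnerProductSpace

lemma double_sum_eq_two_mul {ι : Type*} [LinearOrder ι] (s : Finset ι) (f : ι → ι → ℝ)
    (hsymm : ∀ p q, f p q = f q p) (hdiag : ∀ p, f p p = 0) :
    ∑ p ∈ s, ∑ q ∈ s, f p q = 2 * ∑ p ∈ s, ∑ q ∈ s.filter (fun q => p < q), f p q := by
  have h1 : ∀ p ∈ s, ∑ q ∈ s, f p q
      = ∑ q ∈ s.filter (fun q => p < q), f p q + ∑ q ∈ s.filter (fun q => q < p), f p q := by
    intro p hp
    rw [← Finset.sum_filter_add_sum_filter_not s (fun q => p < q) (f p)]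
    congr 1
    have : s.filter (fun q => ¬ p < q) = insert p (s.filter (fun q => q < p)) := by
      ext x
      simp only [mem_filter, mem_insert, not_lt]
      constructor
      · rintro ⟨hx, hle⟩
        rcases lt_or_eq_of_le hle with h | h
        · exact Or.inr ⟨hx, h⟩
        · exact Or.inl h
      · rintro (rfl | ⟨hx, hlt⟩)
        · exact ⟨hp, le_refl _⟩
        · exact ⟨hx, hlt.le⟩
    rw [this, Finset.sum_insert (by simp), hdiag, zero_add]
  rw [Finset.sum_congr rfl h1, Finset.sum_add_distrib]
  have h2 : ∑ p ∈ s, ∑ q ∈ s.filter (fun q => q < p), f p q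
      = ∑ p ∈ s, ∑ q ∈ s.filter (fun q => p < q), f p q := by
    rw [Finset.sum_sigma', Finset.sum_sigma']
    apply Finset.sum_nbij' (fun x => ⟨x.2, x.1⟩) (fun x => ⟨x.2, x.1⟩) <;>
      simp +contextual [hsymm, Finset.mem_sigma, Finset.mem_filter]
  rw [h2]; ring

lemma simplex_key (d m : ℕ) (v : Fin (m + 1) → EuclideanSpace ℝ (Fin d)) (i : Fin (m + 1)) :
    ‖∑ j, (v j - v i)‖ ^ 2 =
      (m : ℝ) * (∑ j ∈ Finset.univ.erase i, ‖v i - v j‖ ^ 2) -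
        ∑ p ∈ Finset.univ.erase i,
          ∑ q ∈ (Finset.univ.erase i).filter (fun q => p < q), ‖v p - v q‖ ^ 2 := by
  classical
  set E : ℝ := ∑ j ∈ Finset.univ.erase i, ‖v i - v j‖ ^ 2 with hE
  set F : ℝ := ∑ p ∈ Finset.univ.erase i,
      ∑ q ∈ (Finset.univ.erase i).filter (fun q => p < q), ‖v p - v q‖ ^ 2 with hF
  have hA : ∑ p : Fin (m + 1), ‖v p - v i‖ ^ 2 = E := by
    rw [← Finset.sum_erase_add _ _ (Finset.mem_univ i), sub_self]
    simp only [norm_zero]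
    rw [hE]
    have : ∑ p ∈ Finset.univ.erase i, ‖v p - v i‖ ^ 2
        = ∑ p ∈ Finset.univ.erase i, ‖v i - v p‖ ^ 2 :=
      Finset.sum_congr rfl fun j _ => by rw [norm_sub_rev]
    rw [this]; ring
  have hAi : ∑ p ∈ Finset.univ.erase i, ‖v p - v i‖ ^ 2 = E := by
    rw [← hA, ← Finset.sum_erase_add _ _ (Finset.mem_univ i), sub_self]
    simp
  have hT : ∑ p : Fin (m + 1), ∑ q : Fin (m + 1), ‖v p - v q‖ ^ 2 = 2 * E + 2 * F := by
    have hrow : ∀ p : Fin (m + 1), ∑ q : Fin (m + 1), ‖v p - v q‖ ^ 2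
        = (∑ q ∈ Finset.univ.erase i, ‖v p - v q‖ ^ 2) + ‖v p - v i‖ ^ 2 :=
      fun p => (Finset.sum_erase_add _ _ (Finset.mem_univ i)).symm
    rw [← Finset.sum_erase_add _ _ (Finset.mem_univ i)]
    rw [Finset.sum_congr rfl (fun p _ => hrow p), Finset.sum_add_distrib, hAi, hrow i, sub_self]
    have h2F : ∑ p ∈ Finset.univ.erase i, ∑ q ∈ Finset.univ.erase i, ‖v p - v q‖ ^ 2
        = 2 * F := by
      rw [hF]
      exact double_sum_eq_two_mul _ _ (fun p q => by rw [norm_sub_rev]) (fun p => by simp)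
    rw [h2F]
    simp only [norm_zero]
    rw [hE]
    ring
  have h1 : ‖∑ j, (v j - v i)‖ ^ 2
      = ∑ p : Fin (m + 1), ∑ q : Fin (m + 1), ⟪v p - v i, v q - v i⟫ := by
    rw [← real_inner_self_eq_norm_sq, sum_inner]
    exact Finset.sum_congr rfl fun p _ => inner_sum _ _ _
  have h2 : ∀ p q : Fin (m + 1), ⟪v p - v i, v q - v i⟫
      = (‖v p - v i‖ ^ 2 + ‖v q - v i‖ ^ 2 - ‖v p - v q‖ ^ 2) / 2 := by
    intro p q
    have h3 : ‖(v p - v i) - (v q - v i)‖ ^ 2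
        = ‖v p - v i‖ ^ 2 - 2 * ⟪v p - v i, v q - v i⟫ + ‖v q - v i‖ ^ 2 :=
      norm_sub_sq_real _ _
    rw [sub_sub_sub_cancel_right] at h3
    linarith
  rw [h1]
  have hrow2 : ∀ p : Fin (m + 1), ∑ q : Fin (m + 1), ⟪v p - v i, v q - v i⟫
      = (((m : ℝ) + 1) * ‖v p - v i‖ ^ 2 + E - ∑ q : Fin (m + 1), ‖v p - v q‖ ^ 2) / 2 := by
    intro p
    rw [Finset.sum_congr rfl fun q _ => h2 p q, ← Finset.sum_div, Finset.sum_sub_distrib,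
      Finset.sum_add_distrib, Finset.sum_const, Finset.card_univ, Fintype.card_fin, hA,
      nsmul_eq_mul]
    push_cast
    ring
  rw [Finset.sum_congr rfl fun p _ => hrow2 p, ← Finset.sum_div, Finset.sum_sub_distrib,
    Finset.sum_add_distrib, ← Finset.mul_sum, hA, hT, Finset.sum_const, Finset.card_univ,
    Fintype.card_fin, nsmul_eq_mul]
  push_cast
  ring


/-- **Simplex barycentric enclosing.** For an `m`-simplex with vertices `v` and
barycenter `κ`, the quantity `β = (1/(m+1)) · maxᵢ sqrt (m·Eᵢ − Fᵢ)` equals the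
maximal distance from `κ` to a vertex (the barycentric circumradius), and the
ball of radius `β` centered at `κ` encloses the simplex. -/
theorem simplex_barycentric_enclosing (d m : ℕ) (hm : 1 ≤ m) (hmd : m ≤ d)
    (v : Fin (m + 1) → EuclideanSpace ℝ (Fin d))
    (hai : AffineIndependent ℝ v)
    (κ : EuclideanSpace ℝ (Fin d))
    (hκ : κ = (1 / ((m : ℝ) + 1)) • ∑ i, v i)
    (β : ℝ)
    (hβ : β = (1 / ((m : ℝ) + 1)) *
      Finset.univ.sup' Finset.univ_nonempty (fun i : Fin (m + 1) =>
        Real.sqrt ((m : ℝ) * (∑ j ∈ Finset.univ.erase i, ‖v i - v j‖ ^ 2) -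
          ∑ p ∈ Finset.univ.erase i,
            ∑ q ∈ (Finset.univ.erase i).filter (fun q => p < q),
              ‖v p - v q‖ ^ 2))) :
    β = Finset.univ.sup' Finset.univ_nonempty (fun i : Fin (m + 1) => dist κ (v i)) ∧
    convexHull ℝ (Set.range v) ⊆ Metric.closedBall κ β := by
  have hm1 : ((m : ℝ) + 1) ≠ 0 := by positivity
  have hc : (0 : ℝ) ≤ 1 / ((m : ℝ) + 1) := by positivity
  have hdist : ∀ i : Fin (m + 1), dist κ (v i) = (1 / ((m : ℝ) + 1)) *
      Real.sqrt ((m : ℝ) * (∑ j ∈ Finset.univ.erase i, ‖v i - v j‖ ^ 2) -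
        ∑ p ∈ Finset.univ.erase i,
          ∑ q ∈ (Finset.univ.erase i).filter (fun q => p < q), ‖v p - v q‖ ^ 2) := by
    intro i
    have hκv : κ - v i = (1 / ((m : ℝ) + 1)) • ∑ j, (v j - v i) := by
      rw [hκ, Finset.sum_sub_distrib, Finset.sum_const, Finset.card_univ, Fintype.card_fin,
        smul_sub]
      congr 1
      rw [← Nat.cast_smul_eq_nsmul ℝ, smul_smul]
      push_cast
      rw [one_div, inv_mul_cancel₀ hm1, one_smul]
    rw [dist_eq_norm, hκv, norm_smul, Real.norm_eq_abs, abs_of_nonneg hc]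
    congr 1
    rw [← simplex_key d m v i, Real.sqrt_sq (norm_nonneg _)]
  have hpart1 : β = Finset.univ.sup' Finset.univ_nonempty
      (fun i : Fin (m + 1) => dist κ (v i)) := by
    rw [hβ]
    have hcomp := Finset.comp_sup'_eq_sup'_comp (s := (Finset.univ : Finset (Fin (m + 1))))
      (f := fun i : Fin (m + 1) =>
        Real.sqrt ((m : ℝ) * (∑ j ∈ Finset.univ.erase i, ‖v i - v j‖ ^ 2) -
          ∑ p ∈ Finset.univ.erase i,
            ∑ q ∈ (Finset.univ.erase i).filter (fun q => p < q), ‖v p - v q‖ ^ 2))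
      Finset.univ_nonempty
      (fun x : ℝ => (1 / ((m : ℝ) + 1)) * x) (fun x y => mul_max_of_nonneg x y hc)
    simp only [Function.comp_def] at hcomp
    rw [hcomp]
    exact Finset.sup'_congr _ rfl fun i _ => (hdist i).symm
  refine ⟨hpart1, ?_⟩
  apply convexHull_min _ (convex_closedBall κ β)
  rintro _ ⟨i, rfl⟩
  rw [Metric.mem_closedBall, dist_comm, hpart1]
  exact Finset.le_sup' (fun i => dist κ (v i)) (Finset.mem_univ i)
end

section
/- Tverberg's partitioning theorem: Let d ≥ 1 and p ≥ 1 be integers and let P be a finite set of points in EuclideanSpace ℝ (Fin d) with at least (p − 1)*(d + 1) + 1 elements. Then P can be partitioned into p pairwise disjoint subsets P₁, …, P_p whose union is P, such that the intersection of the convex hulls ⋂ i, convexHull ℝ (P i) is nonempty. -/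
/-!
Sarkaria's tensor trick reduces Tverberg's theorem to Bárány's colorful Carathéodory theorem.
Lift the `N > q (d + 1)` points to `â i = (1, a i)` and tensor them with vectors `v₀, …, v_q` of
`ℝ^q` whose only linear relation is `∑ v_j = 0`. In the `q (d + 1)`-dimensional space
`ℝ^q ⊗ ℝ^{d+1}` each of the `N` colour classes `{v_j ⊗ â i}_j` has `0` in its convex hull, so some
rainbow choice `j = σ i` does too. The relation `∑ λ_i v_{σ i} ⊗ â i = 0` forces the fibre sums
`∑_{σ i = j} λ_i â i` to be independent of `j`, and these give one point in the convex hulls of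
all the fibres of `σ`.

For colorful Carathéodory, take a point `x` of least norm in the union of the rainbow hulls. If
`x ≠ 0`, it is a positive combination of affinely independent points of its hull lying on the
supporting hyperplane `⟪x, ·⟫ = ‖x‖²`; these are linearly independent, so some colour is unused.
Swapping in a point `y` of that colour with `⟪x, y⟫ ≤ 0` gives a rainbow hull containing `x` and
`y`, which contradicts the minimality of `x`.
-/

open Set Finset RealInnerProductSpace Module

theorem Convex.sq_norm_le_inner_of_isMinOn {V : Type*} [NormedAddCommGroup V]
    [InnerProductSpace ℝ V] {C : Set V} (hC : Convex ℝ C) {x y : V}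
    (hmin : IsMinOn (‖·‖) C x) (hx : x ∈ C) (hy : y ∈ C) : ‖x‖ ^ 2 ≤ ⟪x, y⟫ := by
  have hmin_sq : IsMinOn (fun z : V => ‖z‖ ^ 2) C x := fun z hz => by
    have : ‖x‖ ≤ ‖z‖ := hmin hz
    simp only [mem_ofPred_eq]
    gcongr
  have := hmin_sq.localize.hasFDerivWithinAt_nonneg
    (hasStrictFDerivAt_norm_sq x).hasFDerivAt.hasFDerivWithinAt
    (sub_mem_posTangentConeAt_of_segment_subset (hC.segment_subset hx hy))
  simpa [inner_sub_right] using this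

theorem AffineIndependent.linearIndependent_of_forall_apply_eq {k V ι : Type*} [Field k]
    [AddCommGroup V] [Module k V] {p : ι → V} (hp : AffineIndependent k p) (f : V →ₗ[k] k)
    {c : k} (hc : c ≠ 0) (hf : ∀ i, f (p i) = c) : LinearIndependent k p := by
  rw [affineIndependent_iff] at hp
  refine linearIndependent_iff'.2 fun s w hsum => hp s w ?_ hsum
  have := congrArg f hsum
  simp only [map_sum, map_smul, hf, smul_eq_mul, ← Finset.sum_mul, map_zero] at this
  exact (mul_eq_zero.1 this).resolve_right hc

theorem eq_of_forall_le_of_sum_mul_eq {κ : Type*} [Fintype κ] {w f : κ → ℝ} {c : ℝ}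
    (hw : ∀ i, 0 < w i) (hw₁ : ∑ i, w i = 1) (hf : ∀ i, c ≤ f i) (hsum : ∑ i, w i * f i = c)
    (i : κ) : f i = c := by
  by_contra hne
  have hlt : ∑ j, w j * c < ∑ j, w j * f j :=
    Finset.sum_lt_sum (fun j _ => mul_le_mul_of_nonneg_left (hf j) (hw j).le)
      ⟨i, mem_univ i, mul_lt_mul_of_pos_left (lt_of_le_of_ne (hf i) (Ne.symm hne)) (hw i)⟩
  rw [← Finset.sum_mul, hw₁, one_mul, hsum] at hlt
  exact lt_irrefl c hlt

theorem exists_range_subset_range_update_of_card_lt {κ ι α : Type*} [Fintype κ] [Fintype ι]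
    [DecidableEq ι] {z : κ → α} {g : ι → α} (hz : range z ⊆ range g)
    (hcard : Fintype.card κ < Fintype.card ι) :
    ∃ k, ∀ y, range z ⊆ range (Function.update g k y) := by
  choose c hc using fun i => hz (mem_range_self i)
  obtain ⟨k, hk⟩ : ∃ k, k ∉ range c := by
    by_contra! h
    exact (Fintype.card_le_of_surjective c h).not_gt hcard
  refine ⟨k, fun y => ?_⟩
  rintro _ ⟨i, rfl⟩
  exact ⟨c i, by rw [Function.update_of_ne (fun h => hk ⟨i, h⟩), hc i]⟩

theorem exists_mem_convexHull_range_update_of_sq_norm_le_inner {V ι : Type*}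
    [NormedAddCommGroup V] [InnerProductSpace ℝ V] [FiniteDimensional ℝ V] [Fintype ι]
    [DecidableEq ι] {g : ι → V} {x : V} (hx : x ≠ 0) (hxg : x ∈ convexHull ℝ (range g))
    (hsupport : ∀ i, ‖x‖ ^ 2 ≤ ⟪x, g i⟫) (hcard : finrank ℝ V < Fintype.card ι) :
    ∃ k, ∀ y, x ∈ convexHull ℝ (range (Function.update g k y)) := by
  obtain ⟨κ, _, z, w, hzg, hz, hw₀, hw₁, hwz⟩ := eq_pos_convex_span_of_mem_convexHull hxg
  have hz_level : ∀ i, ⟪x, z i⟫ = ‖x‖ ^ 2 := by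
    refine eq_of_forall_le_of_sum_mul_eq hw₀ hw₁ (fun i => ?_) ?_
    · obtain ⟨j, hj⟩ := hzg (mem_range_self i)
      exact hj ▸ hsupport j
    · simpa [inner_sum, real_inner_smul_right, real_inner_self_eq_norm_sq] using
        congrArg (⟪x, ·⟫) hwz
  have hκ : Fintype.card κ < Fintype.card ι :=
    ((hz.linearIndependent_of_forall_apply_eq (innerₛₗ ℝ x) (by positivity)
      hz_level).fintype_card_le_finrank).trans_lt hcard
  obtain ⟨k, hk⟩ := exists_range_subset_range_update_of_card_lt hzg hκ
  exact ⟨k, fun y => convexHull_mono (hk y) (hwz ▸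
    mem_convexHull_of_exists_fintype w z (fun i => (hw₀ i).le) hw₁ mem_range_self rfl)⟩

theorem colorful_caratheodory_inner {V ι : Type*} [NormedAddCommGroup V] [InnerProductSpace ℝ V]
    [FiniteDimensional ℝ V] [Fintype ι] {S : ι → Set V} (hS : ∀ i, (S i).Finite)
    (hS₀ : ∀ i, (0 : V) ∈ convexHull ℝ (S i)) (hcard : finrank ℝ V < Fintype.card ι) :
    ∃ g ∈ univ.pi S, (0 : V) ∈ convexHull ℝ (range g) := by
  classical
  have : Nonempty ι := Fintype.card_pos_iff.1 (by omega)
  set K := ⋃ g ∈ univ.pi S, convexHull ℝ (range g)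
  have hK : IsCompact K :=
    (Set.Finite.pi hS).isCompact_biUnion fun g _ => (finite_range g).isCompact_convexHull ℝ
  obtain ⟨g₀, hg₀⟩ : (univ.pi S).Nonempty :=
    univ_pi_nonempty_iff.2 fun i => convexHull_nonempty_iff.1 ⟨0, hS₀ i⟩
  obtain ⟨x, hxK, hmin⟩ := hK.exists_isMinOn
    ⟨_, mem_biUnion hg₀ (subset_convexHull ℝ _ (mem_range_self (Classical.arbitrary ι)))⟩
    continuous_norm.continuousOn
  have hsupport : ∀ g ∈ univ.pi S, x ∈ convexHull ℝ (range g) →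
      ∀ i, ‖x‖ ^ 2 ≤ ⟪x, g i⟫ := fun g hg hxg i =>
    (convex_convexHull ℝ _).sq_norm_le_inner_of_isMinOn
      (hmin.on_subset (subset_biUnion_of_mem (u := fun g => convexHull ℝ (range g)) hg)) hxg
      (subset_convexHull ℝ _ (mem_range_self i))
  obtain ⟨g, hg, hxg⟩ := mem_iUnion₂.1 hxK
  by_cases hx : x = 0
  · exact ⟨g, hg, hx ▸ hxg⟩
  obtain ⟨k, hk⟩ :=
    exists_mem_convexHull_range_update_of_sq_norm_le_inner hx hxg (hsupport g hg hxg) hcard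
  obtain ⟨y, hyS, hy⟩ : ∃ y ∈ S k, ⟪x, y⟫ ≤ ⟪x, 0⟫ :=
    (innerₛₗ ℝ x).concaveOn convex_univ |>.exists_le_of_mem_convexHull (subset_univ _) (hS₀ k)
  have hg' : Function.update g k y ∈ univ.pi S := by
    intro i _
    rcases eq_or_ne i k with rfl | hik
    · simpa using hyS
    · simpa [Function.update_of_ne hik] using hg i (mem_univ i)
  have hxy := hsupport _ hg' (hk y) k
  rw [Function.update_self] at hxy
  exact (hx (by simpa using hxy.trans hy)).elim

theorem colorful_caratheodory {V ι : Type*} [AddCommGroup V] [Module ℝ V]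
    [FiniteDimensional ℝ V] [Fintype ι] {S : ι → Set V} (hS : ∀ i, (S i).Finite)
    (hS₀ : ∀ i, (0 : V) ∈ convexHull ℝ (S i)) (hcard : finrank ℝ V < Fintype.card ι) :
    ∃ g ∈ univ.pi S, (0 : V) ∈ convexHull ℝ (range g) := by
  let e : V ≃ₗ[ℝ] EuclideanSpace ℝ (Fin (finrank ℝ V)) := LinearEquiv.ofFinrankEq _ _ (by simp)
  obtain ⟨g, hg, hg₀⟩ := colorful_caratheodory_inner (S := fun i => e '' S i)
    (fun i => (hS i).image e)
    (fun i => by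
      rw [← LinearEquiv.coe_coe, ← LinearMap.image_convexHull]
      exact ⟨0, hS₀ i, map_zero _⟩)
    (by simpa using hcard)
  refine ⟨e.symm ∘ g, fun i _ => ?_, ?_⟩
  · obtain ⟨v, hv, hgv⟩ := hg i (mem_univ i)
    simpa [← hgv] using hv
  · rw [range_comp, ← LinearEquiv.coe_coe, ← LinearMap.image_convexHull]
    exact ⟨0, hg₀, map_zero _⟩

theorem zero_mem_convexHull_range_of_sum_eq_zero {M κ : Type*} [AddCommGroup M] [Module ℝ M]
    [Fintype κ] [Nonempty κ] {f : κ → M} (hf : ∑ j, f j = 0) :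
    (0 : M) ∈ convexHull ℝ (range f) :=
  mem_convexHull_of_exists_fintype (fun _ => (Fintype.card κ : ℝ)⁻¹) f (fun _ => by positivity)
    (by simp) mem_range_self (by rw [← Finset.smul_sum, hf, smul_zero])

namespace Tverberg

variable {M : Type*} [AddCommGroup M] {q : ℕ}

/-- `lift j x` is `v_j ⊗ x` for the vectors `v_j = e_j` (`j < q`) and `v_q = -(e₀ + ⋯ + e_{q-1})`
of `ℝ^q`. -/
def lift (j : Fin (q + 1)) (x : M) : Fin q → M :=
  fun k => (if j = k.castSucc then x else 0) - (if j = Fin.last q then x else 0)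

theorem sum_lift (x : M) : ∑ j, lift j x = (0 : Fin q → M) := by
  ext k
  simp [lift, Finset.sum_sub_distrib]

theorem smul_lift {R : Type*} [Semiring R] [Module R M] (r : R) (j : Fin (q + 1)) (x : M) :
    r • lift j x = lift j (r • x) := by
  ext k
  simp [lift, smul_sub, smul_ite]

theorem sum_filter_eq_of_sum_lift_eq_zero {ι : Type*} (s : Finset ι) (σ : ι → Fin (q + 1))
    (u : ι → M) (h : ∑ i ∈ s, lift (σ i) (u i) = 0) (j : Fin (q + 1)) :
    ∑ i ∈ s with σ i = j, u i = ∑ i ∈ s with σ i = Fin.last q, u i := by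
  induction j using Fin.lastCases with
  | last => rfl
  | cast k =>
    have := congrFun h k
    simp only [Finset.sum_apply, lift, Finset.sum_sub_distrib, Pi.zero_apply] at this
    rw [← Finset.sum_filter, ← Finset.sum_filter] at this
    exact sub_eq_zero.1 this

end Tverberg

open Tverberg in
theorem exists_tverberg_coloring {E ι : Type*} [AddCommGroup E] [Module ℝ E]
    [FiniteDimensional ℝ E] [Fintype ι] (a : ι → E) {q : ℕ}
    (hcard : q * (finrank ℝ E + 1) < Fintype.card ι) :
    ∃ σ : ι → Fin (q + 1), (⋂ j, convexHull ℝ (a '' {i | σ i = j})).Nonempty := by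
  classical
  let â : ι → ℝ × E := fun i => (1, a i)
  obtain ⟨g, hg, hg₀⟩ := colorful_caratheodory (S := fun i => range fun j => lift j (â i))
    (fun i => finite_range _) (fun i => zero_mem_convexHull_range_of_sum_eq_zero (sum_lift _))
    (by simpa [Module.finrank_pi_fintype, Module.finrank_prod, add_comm] using hcard)
  choose σ hσ using fun i => hg i (mem_univ i)
  refine ⟨σ, ?_⟩
  rw [convexHull_range_eq_exists_affineCombination] at hg₀
  obtain ⟨s, w, hw₀, hw₁, hw⟩ := hg₀
  rw [Finset.affineCombination_eq_linear_combination _ _ _ hw₁] at hw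
  have hfiber := sum_filter_eq_of_sum_lift_eq_zero s σ (fun i => w i • â i)
    (by simpa [smul_lift, ← hσ] using hw)
  have hmass (j) : ∑ i ∈ s with σ i = j, w i = ∑ i ∈ s with σ i = Fin.last q, w i := by
    simpa [â, Prod.fst_sum] using congrArg Prod.fst (hfiber j)
  have hmoment (j) :
      ∑ i ∈ s with σ i = j, w i • a i = ∑ i ∈ s with σ i = Fin.last q, w i • a i := by
    simpa [â, Prod.snd_sum] using congrArg Prod.snd (hfiber j)
  have hpos : 0 < ∑ i ∈ s with σ i = Fin.last q, w i := by
    have : ∑ j, ∑ i ∈ s with σ i = j, w i = 1 := by rw [Finset.sum_fiberwise]; exact hw₁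
    simp only [hmass, Finset.sum_const, Finset.card_univ, Fintype.card_fin, nsmul_eq_mul] at this
    nlinarith
  refine ⟨{i ∈ s | σ i = Fin.last q}.centerMass w a, mem_iInter.2 fun j => ?_⟩
  rw [Finset.centerMass, ← hmass j, ← hmoment j, ← Finset.centerMass]
  exact Finset.centerMass_mem_convexHull _ (fun i hi => hw₀ i (mem_filter.1 hi).1)
    (hmass j ▸ hpos) (fun i hi => ⟨i, (mem_filter.1 hi).2, rfl⟩)

theorem Finset.exists_tverberg_coloring {E : Type*} [AddCommGroup E] [Module ℝ E]
    [FiniteDimensional ℝ E] (P : Finset E) {q : ℕ} (hcard : q * (finrank ℝ E + 1) < #P) :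
    ∃ σ : E → Fin (q + 1),
      (⋂ j, convexHull ℝ (({x ∈ P | σ x = j} : Finset E) : Set E)).Nonempty := by
  classical
  obtain ⟨σ, z, hz⟩ := _root_.exists_tverberg_coloring ((↑) : P → E) (by simpa using hcard)
  refine ⟨fun x => if hx : x ∈ P then σ ⟨x, hx⟩ else 0, z, mem_iInter.2 fun j => ?_⟩
  refine convexHull_mono ?_ (mem_iInter.1 hz j)
  rintro _ ⟨i, hi, rfl⟩
  simpa [i.2] using hi

theorem tverberg_general (d p : ℕ) (hp : 1 ≤ p)
    (P : Finset (EuclideanSpace ℝ (Fin d)))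
    (hcard : (p - 1) * (d + 1) + 1 ≤ P.card) :
    ∃ f : Fin p → Finset (EuclideanSpace ℝ (Fin d)),
      (∀ i, f i ⊆ P) ∧
      (∀ i j, i ≠ j → Disjoint (f i) (f j)) ∧
      (⋃ i, (f i : Set (EuclideanSpace ℝ (Fin d)))) = (P : Set (EuclideanSpace ℝ (Fin d))) ∧
      (⋂ i, convexHull ℝ ((f i : Set (EuclideanSpace ℝ (Fin d))))).Nonempty := by
  obtain ⟨q, rfl⟩ : ∃ q, p = q + 1 := ⟨p - 1, by omega⟩
  obtain ⟨σ, hσ⟩ := P.exists_tverberg_coloring (q := q) (by simpa using hcard)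
  refine ⟨fun j => {x ∈ P | σ x = j}, fun j => filter_subset _ _, fun i j hij => ?_, ?_, hσ⟩
  · exact disjoint_filter.2 fun x _ hi hj => hij (hi.symm.trans hj)
  · ext x
    simp

/-- **Tverberg's partitioning theorem.** Every finite set of at least
`(p − 1)(d + 1) + 1` points in `ℝ^d` can be partitioned into `p` pairwise
disjoint subsets whose convex hulls have a common point. -/
theorem tverberg (d p : ℕ) (hd : 1 ≤ d) (hp : 1 ≤ p)
    (P : Finset (EuclideanSpace ℝ (Fin d)))
    (hcard : (p - 1) * (d + 1) + 1 ≤ P.card) :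
    ∃ f : Fin p → Finset (EuclideanSpace ℝ (Fin d)),
      (∀ i, f i ⊆ P) ∧
      (∀ i j, i ≠ j → Disjoint (f i) (f j)) ∧
      (⋃ i, (f i : Set (EuclideanSpace ℝ (Fin d)))) = (P : Set (EuclideanSpace ℝ (Fin d))) ∧
      (⋂ i, convexHull ℝ ((f i : Set (EuclideanSpace ℝ (Fin d))))).Nonempty :=
  tverberg_general d p hp P hcard
end

section
/- No-dimension Carathéodory theorem: Let P be a finite set of n points in EuclideanSpace ℝ (Fin d), let r be an integer with 1 ≤ r ≤ n, and let a ∈ convexHull ℝ P. Then there exists a subset Q of P with exactly r elements such that the distance from a to the convex hull of Q satisfies infDist a (convexHull ℝ Q) ≤ diam P / sqrt(2*r). -/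
/-!
Maurey's greedy averaging argument. Write `a = ∑ wₚ p` as a convex combination of `P`. The
weighted variance `∑ wₚ ‖p - a‖²` is half the weighted mean of `‖p - q‖²`, hence at most
`diam P ^ 2 / 2`; since the cross term `∑ wₚ ⟪u, p - a⟫` vanishes, for every `u` some `p ∈ P`
has `‖u + (p - a)‖² ≤ ‖u‖² + diam P ^ 2 / 2`. Choosing `p₁, …, p_r` greedily with
`u = ∑_{i<k} (pᵢ - a)` gives `‖∑ (pᵢ - a)‖² ≤ r diam P ^ 2 / 2`, so the centroid of the `pᵢ`,
a point of the hull of at most `r` points of `P`, is within `diam P / √(2r)` of `a`.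
-/

open Finset

section

variable {ι E : Type*} [NormedAddCommGroup E] [InnerProductSpace ℝ E]

theorem Finset.sum_sum_mul_mul_norm_sub_sq (s : Finset ι) (w : ι → ℝ) (v : ι → E) :
    ∑ i ∈ s, ∑ j ∈ s, w i * w j * ‖v i - v j‖ ^ 2 =
      2 * ((∑ i ∈ s, w i) * ∑ i ∈ s, w i * ‖v i‖ ^ 2 - ‖∑ i ∈ s, w i • v i‖ ^ 2) := by
  have hcross : ‖∑ i ∈ s, w i • v i‖ ^ 2 = ∑ i ∈ s, ∑ j ∈ s, w i * w j * inner ℝ (v i) (v j) := by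
    rw [← real_inner_self_eq_norm_sq, sum_inner]
    simp_rw [inner_sum, real_inner_smul_left, real_inner_smul_right, ← mul_assoc]
  have hsq : ∑ i ∈ s, ∑ j ∈ s, w i * w j * ‖v j‖ ^ 2 =
      (∑ i ∈ s, w i) * ∑ i ∈ s, w i * ‖v i‖ ^ 2 := by
    simp_rw [sum_mul_sum, mul_assoc]
  have hterm : ∀ i j, w i * w j * ‖v i - v j‖ ^ 2 = w j * w i * ‖v i‖ ^ 2 +
      w i * w j * ‖v j‖ ^ 2 - 2 * (w i * w j * inner ℝ (v i) (v j)) := fun i j => by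
    rw [norm_sub_sq_real]; ring
  simp_rw [hterm, sum_sub_distrib, sum_add_distrib, ← mul_sum]
  rw [sum_comm (f := fun i j => w j * w i * ‖v i‖ ^ 2), hsq, hcross]
  ring

theorem Finset.sum_smul_sub_centerMass {s : Finset ι} {w : ι → ℝ} (z : ι → E)
    (hw₁ : ∑ i ∈ s, w i = 1) : ∑ i ∈ s, w i • (z i - s.centerMass w z) = 0 := by
  simp_rw [smul_sub, sum_sub_distrib, ← sum_smul, hw₁, one_smul, s.centerMass_eq_of_sum_1 z hw₁,
    sub_self]

theorem Finset.sum_mul_norm_sub_centerMass_sq_le {s : Finset ι} {w : ι → ℝ} {z : ι → E} {D : ℝ}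
    (hw₀ : ∀ i ∈ s, 0 ≤ w i) (hw₁ : ∑ i ∈ s, w i = 1)
    (hD : ∀ i ∈ s, ∀ j ∈ s, dist (z i) (z j) ≤ D) :
    ∑ i ∈ s, w i * ‖z i - s.centerMass w z‖ ^ 2 ≤ D ^ 2 / 2 := by
  have hpairs := s.sum_sum_mul_mul_norm_sub_sq w fun i => z i - s.centerMass w z
  rw [s.sum_smul_sub_centerMass z hw₁, hw₁, norm_zero] at hpairs
  simp only [sub_sub_sub_cancel_right, one_mul] at hpairs
  have hbound : ∑ i ∈ s, ∑ j ∈ s, w i * w j * ‖z i - z j‖ ^ 2 ≤ D ^ 2 := calc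
    _ ≤ ∑ i ∈ s, ∑ j ∈ s, w i * w j * D ^ 2 := by
      gcongr with i hi j hj
      · exact mul_nonneg (hw₀ i hi) (hw₀ j hj)
      · rw [← dist_eq_norm]; exact hD i hi j hj
    _ = D ^ 2 := by simp_rw [← sum_mul, ← mul_sum, hw₁, mul_one, hw₁, one_mul]
  linarith

theorem exists_norm_add_sub_sq_le {P : Finset E} {a : E} (ha : a ∈ convexHull ℝ (P : Set E))
    (u : E) : ∃ p ∈ P, ‖u + (p - a)‖ ^ 2 ≤ ‖u‖ ^ 2 + Metric.diam (P : Set E) ^ 2 / 2 := by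
  obtain ⟨w, hw₀, hw₁, rfl⟩ := Finset.mem_convexHull.1 ha
  set a := P.centerMass w id
  have hvar : ∑ p ∈ P, w p * ‖p - a‖ ^ 2 ≤ Metric.diam (P : Set E) ^ 2 / 2 :=
    sum_mul_norm_sub_centerMass_sq_le hw₀ hw₁ fun p hp q hq =>
      Metric.dist_le_diam_of_mem P.finite_toSet.isBounded hp hq
  have hmean : ∑ p ∈ P, w p * ‖u + (p - a)‖ ^ 2 = ‖u‖ ^ 2 + ∑ p ∈ P, w p * ‖p - a‖ ^ 2 := by
    have hcentred : ∑ p ∈ P, w p • (p - a) = 0 := P.sum_smul_sub_centerMass id hw₁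
    have hinner : ∑ p ∈ P, w p * inner ℝ u (p - a) = 0 := by
      simp_rw [← real_inner_smul_right, ← inner_sum, hcentred, inner_zero_right]
    simp_rw [norm_add_sq_real, mul_add, sum_add_distrib, ← sum_mul, hw₁, one_mul]
    simp_rw [mul_left_comm (w _) 2, ← mul_sum, hinner, mul_zero, add_zero]
  -- some value of a function lies below its weighted mean: `id` is concave on `ℝ`
  obtain ⟨p, hp, hle⟩ := (concaveOn_id (convex_univ (𝕜 := ℝ))).exists_le_of_centerMass hw₀
    (hw₁ ▸ one_pos) (p := fun p => ‖u + (p - a)‖ ^ 2) (fun _ _ => Set.mem_univ _)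
  refine ⟨p, hp, ?_⟩
  rw [P.centerMass_eq_of_sum_1 _ hw₁] at hle
  simp only [id, smul_eq_mul] at hle
  linarith

theorem exists_fin_norm_sum_sub_sq_le {P : Finset E} {a : E} (ha : a ∈ convexHull ℝ (P : Set E))
    (k : ℕ) : ∃ g : Fin k → E, (∀ i, g i ∈ P) ∧
      ‖∑ i, (g i - a)‖ ^ 2 ≤ k * (Metric.diam (P : Set E) ^ 2 / 2) := by
  induction k with
  | zero => exact ⟨finZeroElim, finZeroElim, by simp⟩
  | succ k ih =>
    obtain ⟨g, hgP, hg⟩ := ih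
    obtain ⟨p, hp, hpa⟩ := exists_norm_add_sub_sq_le ha (∑ i, (g i - a))
    refine ⟨Fin.cons p g, Fin.cases hp hgP, ?_⟩
    rw [Fin.sum_univ_succ, add_comm]
    simp only [Fin.cons_zero, Fin.cons_succ]
    push_cast
    linarith

theorem exists_subset_card_le_dist_convexHull_le {P : Finset E} {a : E}
    (ha : a ∈ convexHull ℝ (P : Set E)) {k : ℕ} (hk : 0 < k) :
    ∃ Q ⊆ P, Q.card ≤ k ∧ ∃ b ∈ convexHull ℝ (Q : Set E),
      dist a b ≤ Metric.diam (P : Set E) / √(2 * k) := by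
  classical
  obtain ⟨g, hgP, hg⟩ := exists_fin_norm_sum_sub_sq_le ha k
  have hk' : (0 : ℝ) < k := Nat.cast_pos.2 hk
  set b := (univ : Finset (Fin k)).centerMass (fun _ => (1 : ℝ)) g
  have hb : b - a = (k : ℝ)⁻¹ • ∑ i, (g i - a) := by
    simp [b, Finset.centerMass, sum_sub_distrib, smul_sub, ← Nat.cast_smul_eq_nsmul ℝ, smul_smul,
      hk'.ne']
  refine ⟨univ.image g, image_subset_iff.2 fun i _ => hgP i, card_image_le.trans (by simp), b,
    univ.centerMass_mem_convexHull (fun _ _ => zero_le_one) (by simpa using hk)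
      fun i _ => mem_coe.2 (mem_image_of_mem g (mem_univ i)), ?_⟩
  have hsqrt : Metric.diam (P : Set E) / √(2 * k) = √(Metric.diam (P : Set E) ^ 2 / (2 * k)) := by
    rw [Real.sqrt_div (sq_nonneg _), Real.sqrt_sq Metric.diam_nonneg]
  rw [dist_comm, dist_eq_norm, hb, norm_smul, hsqrt, Real.le_sqrt (by positivity) (by positivity),
    mul_pow, Real.norm_eq_abs, sq_abs]
  calc (k : ℝ)⁻¹ ^ 2 * ‖∑ i, (g i - a)‖ ^ 2
      ≤ (k : ℝ)⁻¹ ^ 2 * (k * (Metric.diam (P : Set E) ^ 2 / 2)) := by gcongr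
    _ = Metric.diam (P : Set E) ^ 2 / (2 * k) := by field_simp

end

/-- **No-dimension Carathéodory theorem.** If `P` is a set of `n` points in
`ℝ^d`, `1 ≤ r ≤ n`, and `a ∈ convexHull ℝ P`, then there is an `r`-element
subset `Q ⊆ P` with `dist (a, convexHull ℝ Q) ≤ diam P / sqrt (2r)`. -/
theorem no_dimension_caratheodory (d n r : ℕ) (hr1 : 1 ≤ r) (hrn : r ≤ n)
    (P : Finset (EuclideanSpace ℝ (Fin d))) (hP : P.card = n)
    (a : EuclideanSpace ℝ (Fin d))
    (ha : a ∈ convexHull ℝ (P : Set (EuclideanSpace ℝ (Fin d)))) :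
    ∃ Q : Finset (EuclideanSpace ℝ (Fin d)), Q ⊆ P ∧ Q.card = r ∧
      Metric.infDist a (convexHull ℝ (Q : Set (EuclideanSpace ℝ (Fin d)))) ≤
        Metric.diam (P : Set (EuclideanSpace ℝ (Fin d))) / Real.sqrt (2 * r) := by
  obtain ⟨Q, hQP, hQr, b, hbQ, hab⟩ := exists_subset_card_le_dist_convexHull_le ha hr1
  obtain ⟨Q', hQQ', hQ'P, hQ'r⟩ := exists_subsuperset_card_eq hQP hQr (hP ▸ hrn)
  exact ⟨Q', hQ'P, hQ'r,
    (Metric.infDist_le_dist_of_mem (convexHull_mono (coe_subset.2 hQQ') hbQ)).trans hab⟩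
end

section
/- No-dimension Tverberg theorem: Let P be a finite set of n points in EuclideanSpace ℝ (Fin d) and let k be an integer with 1 ≤ k ≤ n. Then there exist a point q and a partition of P into k pairwise disjoint nonempty subsets P₁, …, P_k whose union is P, such that for every i: infDist q (convexHull ℝ (P i)) ≤ (2 + sqrt 2) * sqrt(k / n) * diam P. -/
/-!
Let `c` be the centroid of `P`. Colour `P` with `k` colours so that every colour class has
`n / k` or `n / k + 1` points, and among all recolourings with the same class sizes choose one
minimising `∑ᵢ ‖cᵢ - c‖²`, where `cᵢ` is the centroid of class `i`. The vectors `cᵢ - c`,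
weighted by the class sizes, sum to zero, so if `cᵢ ≠ c` some `cⱼ - c` has negative inner product
with `cᵢ - c`; exchanging a suitable point of class `i` with one of class `j` then shows, by
minimality, that `‖cᵢ - c‖² ≤ 2 diam(P)² / (n / k) ≤ 4 (k / n) diam(P)²`. Hence `c` lies within
`2 √(k / n) diam P` of every `conv Pᵢ`.
-/

open Finset Equiv
open scoped RealInnerProductSpace

namespace NoDimensionTverberg

section SwapSums

variable {α M : Type*} [DecidableEq α] [AddCommGroup M]

lemma sum_sub_comp_swap_of_mem_of_notMem {s : Finset α} {a b : α} (ha : a ∈ s) (hb : b ∉ s)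
    (f : α → M) : ∑ x ∈ s, (f (swap a b x) - f x) = f b - f a := by
  rw [sum_eq_single_of_mem a ha fun x hx hxa => ?_, swap_apply_left]
  rw [swap_apply_of_ne_of_ne hxa (ne_of_mem_of_not_mem hx hb), sub_self]

lemma sum_sub_comp_swap_of_notMem_of_notMem {s : Finset α} {a b : α} (ha : a ∉ s) (hb : b ∉ s)
    (f : α → M) : ∑ x ∈ s, (f (swap a b x) - f x) = 0 :=
  sum_eq_zero fun x hx => by
    rw [swap_apply_of_ne_of_ne (ne_of_mem_of_not_mem hx ha) (ne_of_mem_of_not_mem hx hb), sub_self]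

end SwapSums

section Coloring

variable {α β ι : Type*} [Fintype α] [DecidableEq ι]

def colorClass (g : α → ι) (i : ι) : Finset α := {x | g x = i}

@[simp] lemma mem_colorClass {g : α → ι} {i : ι} {x : α} : x ∈ colorClass g i ↔ g x = i := by
  simp [colorClass]

lemma disjoint_colorClass (g : α → ι) {i j : ι} (hij : i ≠ j) :
    Disjoint (colorClass g i) (colorClass g j) :=
  disjoint_left.2 fun _ hi hj => hij ((mem_colorClass.1 hi).symm.trans (mem_colorClass.1 hj))

lemma iUnion_coe_map_subtype_colorClass {E : Type*} {s : Finset E} (g : s → ι) :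
    ⋃ i, ((colorClass g i).map (Function.Embedding.subtype _) : Set E) = s := by
  ext x
  simp only [Set.mem_iUnion, coe_map, Set.mem_image, mem_coe, mem_colorClass,
    Function.Embedding.coe_subtype]
  exact ⟨fun ⟨_, y, _, hy⟩ => hy ▸ y.2, fun hx => ⟨g ⟨x, hx⟩, ⟨x, hx⟩, rfl, rfl⟩⟩

lemma card_colorClass_comp_equiv [Fintype β] (g : β → ι) (e : α ≃ β) (i : ι) :
    #(colorClass (g ∘ e) i) = #(colorClass g i) :=
  card_equiv e fun _ => by simp

lemma sum_colorClass_comp_perm {M : Type*} [AddCommMonoid M] (g : α → ι) (σ : Perm α) (i : ι)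
    (f : α → M) : ∑ x ∈ colorClass (g ∘ σ) i, f x = ∑ x ∈ colorClass g i, f (σ.symm x) :=
  sum_equiv σ (fun _ => by simp) fun _ _ => by simp

lemma sum_sum_colorClass [Fintype ι] {M : Type*} [AddCommMonoid M] (g : α → ι) (f : α → M) :
    ∑ i, ∑ x ∈ colorClass g i, f x = ∑ x, f x :=
  sum_fiberwise univ g f

lemma sum_card_colorClass [Fintype ι] (g : α → ι) : ∑ i, #(colorClass g i) = Fintype.card α := by
  rw [← card_univ, card_eq_sum_card_fiberwise (f := g) (t := univ) (by simp)]
  rfl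

lemma exists_balanced_coloring {n k : ℕ} (hk : 0 < k) (hα : Fintype.card α = n) :
    ∃ g : α → Fin k, ∀ i, n / k ≤ #(colorClass g i) ∧ #(colorClass g i) ≤ n / k + 1 := by
  let byResidue : Fin n → Fin k := fun j => ⟨j % k, Nat.mod_lt _ hk⟩
  refine ⟨byResidue ∘ Fintype.equivFinOfCardEq hα, fun i => ?_⟩
  have hcount : #(colorClass byResidue i) = Nat.count (· ≡ i [MOD k]) n := by
    rw [Nat.count_eq_card_filter_range, ← Nat.Iio_eq_range, ← Fin.map_valEmbedding_univ,
      filter_map, card_map]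
    congr 1
    ext j
    simp [colorClass, byResidue, Nat.ModEq, Fin.ext_iff, Nat.mod_eq_of_lt i.2]
  rw [card_colorClass_comp_equiv, hcount, Nat.count_modEq_card n hk]
  split_ifs <;> omega

end Coloring

section Mean

variable {α ι F : Type*} [AddCommGroup F] [Module ℝ F]

noncomputable def mean (s : Finset α) (z : α → F) : F := (#s : ℝ)⁻¹ • ∑ x ∈ s, z x

lemma card_smul_mean (s : Finset α) (z : α → F) : (#s : ℝ) • mean s z = ∑ x ∈ s, z x := by
  rcases s.eq_empty_or_nonempty with rfl | hs
  · simp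
  · rw [mean, smul_smul, mul_inv_cancel₀ (by positivity), one_smul]

lemma mean_mem_convexHull {s : Finset α} (hs : s.Nonempty) (z : α → F) :
    mean s z ∈ convexHull ℝ (z '' s) := by
  have := s.centerMass_mem_convexHull (w := fun _ => (1 : ℝ)) (fun _ _ => zero_le_one)
    (by simpa using hs.card_pos)
    fun x hx => Set.mem_image_of_mem z hx
  simpa [centerMass, mean] using this

variable [Fintype α] [DecidableEq ι]

lemma mean_colorClass_comp_swap [DecidableEq α] (g : α → ι) (z : α → F) (a b : α) (l : ι) :
    mean (colorClass (g ∘ swap a b) l) z = mean (colorClass g l) z +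
      (#(colorClass g l) : ℝ)⁻¹ • ∑ x ∈ colorClass g l, (z (swap a b x) - z x) := by
  rw [mean, mean, card_colorClass_comp_equiv, sum_colorClass_comp_perm, symm_swap,
    sum_sub_distrib, smul_sub, add_sub_cancel]

lemma sum_card_smul_mean_colorClass_sub [Fintype ι] (g : α → ι) (z : α → F) :
    ∑ l, (#(colorClass g l) : ℝ) • (mean (colorClass g l) z - mean univ z) = 0 := by
  rw [sum_congr rfl fun l _ => smul_sub _ _ _, sum_sub_distrib, ← sum_smul]
  simp_rw [card_smul_mean, sum_sum_colorClass]
  rw [← Nat.cast_sum, sum_card_colorClass, ← card_univ, card_smul_mean, sub_self]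

end Mean

section Inner

variable {α F : Type*} [NormedAddCommGroup F] [InnerProductSpace ℝ F]

lemma exists_inner_mean_le {s : Finset α} (hs : s.Nonempty) (z : α → F) (u : F) :
    ∃ a ∈ s, ⟪u, mean s z⟫ ≤ ⟪u, z a⟫ := by
  refine exists_le_of_sum_le hs ?_
  rw [sum_const, nsmul_eq_mul, ← inner_sum, ← card_smul_mean, inner_smul_right]

lemma exists_inner_le_mean {s : Finset α} (hs : s.Nonempty) (z : α → F) (u : F) :
    ∃ b ∈ s, ⟪u, z b⟫ ≤ ⟪u, mean s z⟫ := by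
  obtain ⟨b, hb, h⟩ := exists_inner_mean_le hs z (-u)
  exact ⟨b, hb, by simpa only [inner_neg_left, neg_le_neg_iff] using h⟩

lemma exists_inner_neg_of_sum_smul_eq_zero {ι : Type*} [Fintype ι] {w : ι → ℝ}
    (hw : ∀ l, 0 < w l) {v : ι → F} (hv : ∑ l, w l • v l = 0) {i : ι} (hi : v i ≠ 0) :
    ∃ j, ⟪v i, v j⟫ < 0 := by
  by_contra! h
  have hzero : ∑ l, w l * ⟪v i, v l⟫ = 0 := by
    simp_rw [← real_inner_smul_right, ← inner_sum, hv, inner_zero_right]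
  have hpos : 0 < w i * ⟪v i, v i⟫ := mul_pos (hw i) (real_inner_self_pos.2 hi)
  have := single_le_sum (fun l _ => mul_nonneg (hw l).le (h l)) (mem_univ i)
  linarith

end Inner

section Potential

variable {α ι F : Type*} [Fintype α] [Fintype ι] [DecidableEq ι]
  [NormedAddCommGroup F] [InnerProductSpace ℝ F]

noncomputable def potential (z : α → F) (c : F) (g : α → ι) : ℝ :=
  ∑ i, ‖mean (colorClass g i) z - c‖ ^ 2

lemma potential_comp_swap_sub [DecidableEq α] {g : α → ι} {a b : α} {i j : ι} (hij : i ≠ j)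
    (ha : g a = i) (hb : g b = j) (z : α → F) (c : F) :
    let r l := (#(colorClass g l) : ℝ)⁻¹
    let v l := mean (colorClass g l) z - c
    potential z c (g ∘ swap a b) - potential z c g =
      2 * ⟪r i • v i - r j • v j, z b - z a⟫ + (r i ^ 2 + r j ^ 2) * ‖z b - z a‖ ^ 2 := by
  intro r v
  have hai : a ∈ colorClass g i := mem_colorClass.2 ha
  have hbj : b ∈ colorClass g j := mem_colorClass.2 hb
  have hbi : b ∉ colorClass g i := by simp [hb, hij.symm]
  have haj : a ∉ colorClass g j := by simp [ha, hij]
  have hi : mean (colorClass (g ∘ swap a b) i) z - c = v i + r i • (z b - z a) := by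
    rw [mean_colorClass_comp_swap, sum_sub_comp_swap_of_mem_of_notMem hai hbi, add_sub_right_comm]
  have hj : mean (colorClass (g ∘ swap a b) j) z - c = v j - r j • (z b - z a) := by
    rw [mean_colorClass_comp_swap, swap_comm, sum_sub_comp_swap_of_mem_of_notMem hbj haj,
      ← neg_sub (z b), smul_neg, ← sub_eq_add_neg, sub_right_comm]
  have hl : ∀ l, l ≠ i ∧ l ≠ j →
      ‖mean (colorClass (g ∘ swap a b) l) z - c‖ ^ 2 - ‖v l‖ ^ 2 = 0 := fun l ⟨hli, hlj⟩ => by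
    rw [mean_colorClass_comp_swap, sum_sub_comp_swap_of_notMem_of_notMem (by simp [ha, hli.symm])
      (by simp [hb, hlj.symm]), smul_zero, add_zero, sub_self]
  have expand (p q : ℝ) (x y w : F) : ‖x + p • w‖ ^ 2 - ‖x‖ ^ 2 + (‖y - q • w‖ ^ 2 - ‖y‖ ^ 2) =
      2 * ⟪p • x - q • y, w⟫ + (p ^ 2 + q ^ 2) * ‖w‖ ^ 2 := by
    rw [norm_add_sq_real, norm_sub_sq_real, inner_sub_left, real_inner_smul_left,
      real_inner_smul_left, real_inner_smul_right, real_inner_smul_right, norm_smul, norm_smul,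
      Real.norm_eq_abs, Real.norm_eq_abs, mul_pow, mul_pow, sq_abs, sq_abs]
    ring
  rw [potential, potential, ← sum_sub_distrib, Fintype.sum_eq_add i j hij hl, hi, hj]
  exact expand _ _ _ _ _

lemma exists_two_inv_card_mul_sq_norm_le [DecidableEq α] {g : α → ι} {z : α → F} {D : ℝ}
    (hz : ∀ x y, ‖z x - z y‖ ≤ D) (hne : ∀ l, (colorClass g l).Nonempty)
    (hmin : ∀ a b, potential z (mean univ z) g ≤ potential z (mean univ z) (g ∘ swap a b))
    {i : ι} (hi : mean (colorClass g i) z ≠ mean univ z) :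
    ∃ j, 2 * (#(colorClass g i) : ℝ)⁻¹ * ‖mean (colorClass g i) z - mean univ z‖ ^ 2 ≤
      ((#(colorClass g i) : ℝ)⁻¹ ^ 2 + (#(colorClass g j) : ℝ)⁻¹ ^ 2) * D ^ 2 := by
  set r : ι → ℝ := fun l => (#(colorClass g l) : ℝ)⁻¹
  set v : ι → F := fun l => mean (colorClass g l) z - mean univ z
  obtain ⟨j, hij⟩ := exists_inner_neg_of_sum_smul_eq_zero
    (fun l => by exact_mod_cast (hne l).card_pos) (sum_card_smul_mean_colorClass_sub g z)
    (sub_ne_zero.2 hi)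
  have hji : i ≠ j := by
    rintro rfl
    exact real_inner_self_nonneg.not_gt hij
  set u := r i • v i - r j • v j
  -- Swap a point of class `i` at least as far along `u` as its centroid with a point of
  -- class `j` at least as far against `u` as its centroid.
  obtain ⟨a, ha, hau⟩ := exists_inner_mean_le (hne i) z u
  obtain ⟨b, hb, hbu⟩ := exists_inner_le_mean (hne j) z u
  have hr : ∀ l, 0 ≤ r l := fun l => by positivity
  have huw : ⟪u, z b - z a⟫ ≤ -(r i * ‖v i‖ ^ 2) :=
    calc ⟪u, z b - z a⟫ ≤ ⟪u, v j - v i⟫ := by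
          simp only [v, inner_sub_right] at hau hbu ⊢
          linarith
      _ = -(r i * ‖v i‖ ^ 2) + (r i + r j) * ⟪v i, v j⟫ - r j * ‖v j‖ ^ 2 := by
          simp only [u, inner_sub_left, inner_sub_right, real_inner_smul_left,
            real_inner_self_eq_norm_sq, real_inner_comm (v i) (v j)]
          ring
      _ ≤ -(r i * ‖v i‖ ^ 2) := by
          nlinarith [mul_nonneg (add_nonneg (hr i) (hr j)) (neg_nonneg.2 hij.le),
            mul_nonneg (hr j) (sq_nonneg ‖v j‖)]
  have hw : (r i ^ 2 + r j ^ 2) * ‖z b - z a‖ ^ 2 ≤ (r i ^ 2 + r j ^ 2) * D ^ 2 := by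
    gcongr
    exact hz b a
  have hswap := potential_comp_swap_sub hji (mem_colorClass.1 ha) (mem_colorClass.1 hb) z
    (mean univ z)
  have hpot := hmin a b
  exact ⟨j, by linarith⟩

lemma mul_sq_norm_mean_sub_le [DecidableEq α] {g : α → ι} {z : α → F} {D : ℝ} {m : ℕ}
    (hm : 0 < m) (hz : ∀ x y, ‖z x - z y‖ ≤ D)
    (hcard : ∀ l, m ≤ #(colorClass g l) ∧ #(colorClass g l) ≤ 2 * m)
    (hmin : ∀ a b, potential z (mean univ z) g ≤ potential z (mean univ z) (g ∘ swap a b))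
    (i : ι) : m * ‖mean (colorClass g i) z - mean univ z‖ ^ 2 ≤ 2 * D ^ 2 := by
  by_cases hi : mean (colorClass g i) z = mean univ z
  · rw [hi, sub_self, norm_zero, zero_pow two_ne_zero, mul_zero]
    positivity
  have hpos : ∀ l, (0 : ℝ) < #(colorClass g l) := fun l => by exact_mod_cast hm.trans_le (hcard l).1
  obtain ⟨j, hj⟩ := exists_two_inv_card_mul_sq_norm_le hz
    (fun l => card_pos.1 (hm.trans_le (hcard l).1)) hmin hi
  set p := (#(colorClass g i) : ℝ)⁻¹
  set q := (#(colorClass g j) : ℝ)⁻¹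
  set V := ‖mean (colorClass g i) z - mean univ z‖ ^ 2
  have hmp : (m : ℝ) * p ≤ 1 := by
    rw [mul_inv_le_iff₀ (hpos i), one_mul]; exact_mod_cast (hcard i).1
  have hmq : (m : ℝ) * q ≤ 1 := by
    rw [mul_inv_le_iff₀ (hpos j), one_mul]; exact_mod_cast (hcard j).1
  have h2mp : 1 ≤ 2 * m * p := by
    rw [le_mul_inv_iff₀ (hpos i), one_mul]; exact_mod_cast (hcard i).2
  have hsq : (m : ℝ) ^ 2 * (p ^ 2 + q ^ 2) ≤ 2 := by
    nlinarith [mul_nonneg (Nat.cast_nonneg m) (inv_nonneg.2 (hpos i).le),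
      mul_nonneg (Nat.cast_nonneg m) (inv_nonneg.2 (hpos j).le)]
  calc m * V ≤ (2 * m * p) * (m * V) := le_mul_of_one_le_left (by positivity) h2mp
    _ = m ^ 2 * (2 * p * V) := by ring
    _ ≤ m ^ 2 * ((p ^ 2 + q ^ 2) * D ^ 2) := by gcongr
    _ = (m ^ 2 * (p ^ 2 + q ^ 2)) * D ^ 2 := by ring
    _ ≤ 2 * D ^ 2 := by gcongr

lemma exists_coloring_mul_sq_norm_mean_sub_le (g₀ : α → ι) {z : α → F} {D : ℝ} {m : ℕ}
    (hm : 0 < m) (hz : ∀ x y, ‖z x - z y‖ ≤ D)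
    (hcard : ∀ l, m ≤ #(colorClass g₀ l) ∧ #(colorClass g₀ l) ≤ 2 * m) :
    ∃ g : α → ι, (∀ l, #(colorClass g l) = #(colorClass g₀ l)) ∧
      ∀ i, m * ‖mean (colorClass g i) z - mean univ z‖ ^ 2 ≤ 2 * D ^ 2 := by
  classical
  obtain ⟨σ, hσ⟩ := Finite.exists_min fun σ : Perm α => potential z (mean univ z) (g₀ ∘ σ)
  have hcard' : ∀ l, #(colorClass (g₀ ∘ σ) l) = #(colorClass g₀ l) :=
    card_colorClass_comp_equiv g₀ σ
  refine ⟨g₀ ∘ σ, hcard', mul_sq_norm_mean_sub_le hm hz (fun l => hcard' l ▸ hcard l) ?_⟩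
  intro a b
  simpa only [Perm.coe_mul, Function.comp_assoc] using hσ (σ * swap a b)

end Potential

lemma le_two_mul_sqrt_div_mul {n k : ℕ} (hk : 0 < k) (hkn : k ≤ n) {x D : ℝ} (hx : 0 ≤ x)
    (hD : 0 ≤ D) (h : (n / k : ℕ) * x ^ 2 ≤ 2 * D ^ 2) : x ≤ 2 * √(k / n) * D := by
  have hn : (0 : ℝ) < n := by exact_mod_cast hk.trans_le hkn
  have hnk : (n : ℝ) ≤ 2 * k * (n / k : ℕ) := by
    have := Nat.div_add_mod n k
    have := Nat.mod_lt n hk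
    have := Nat.div_pos hkn hk
    exact_mod_cast (by nlinarith : n ≤ 2 * k * (n / k))
  rw [← pow_le_pow_iff_left₀ hx (by positivity) two_ne_zero, mul_pow, mul_pow,
    Real.sq_sqrt (by positivity)]
  calc x ^ 2 ≤ 4 * k * D ^ 2 / n := by
        rw [le_div_iff₀ hn]
        nlinarith [sq_nonneg x, (Nat.cast_nonneg k : (0 : ℝ) ≤ k)]
    _ = 2 ^ 2 * (k / n) * D ^ 2 := by ring

end NoDimensionTverberg

open NoDimensionTverberg

/-- **No-dimension Tverberg theorem.** Let `P` be a set of `n` points in `ℝ^d`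
and `1 ≤ k ≤ n`. Then there exist a point `q` and a partition of `P` into `k`
pairwise disjoint nonempty subsets such that `q` is at distance at most
`(2 + √2) · sqrt (k/n) · diam P` from the convex hull of each part. -/
theorem no_dimension_tverberg (d n k : ℕ) (hk1 : 1 ≤ k) (hkn : k ≤ n)
    (P : Finset (EuclideanSpace ℝ (Fin d))) (hP : P.card = n) :
    ∃ (q : EuclideanSpace ℝ (Fin d))
      (f : Fin k → Finset (EuclideanSpace ℝ (Fin d))),
      (∀ i, f i ⊆ P) ∧
      (∀ i, (f i).Nonempty) ∧
      (∀ i j, i ≠ j → Disjoint (f i) (f j)) ∧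
      (⋃ i, (f i : Set (EuclideanSpace ℝ (Fin d)))) = (P : Set (EuclideanSpace ℝ (Fin d))) ∧
      ∀ i, Metric.infDist q (convexHull ℝ ((f i : Set (EuclideanSpace ℝ (Fin d))))) ≤
        (2 + Real.sqrt 2) * Real.sqrt ((k : ℝ) / (n : ℝ)) *
          Metric.diam (P : Set (EuclideanSpace ℝ (Fin d))) := by
  let z : P → EuclideanSpace ℝ (Fin d) := (↑)
  have hm : 0 < n / k := Nat.div_pos hkn hk1
  obtain ⟨g₀, hg₀⟩ := exists_balanced_coloring (α := P) hk1 (by simpa using hP)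
  obtain ⟨g, hg, hbound⟩ := exists_coloring_mul_sq_norm_mean_sub_le g₀ (z := z) hm
    (fun x y => (dist_eq_norm _ _).symm.trans_le
      (Metric.dist_le_diam_of_mem P.finite_toSet.isBounded x.2 y.2))
    fun l => ⟨(hg₀ l).1, (hg₀ l).2.trans (by omega)⟩
  have hne : ∀ i, (colorClass g i).Nonempty := fun i => card_pos.1 (hm.trans_le (hg i ▸ (hg₀ i).1))
  refine ⟨mean univ z, fun i => (colorClass g i).map (Function.Embedding.subtype _),
    fun i _ hx => property_of_mem_map_subtype _ hx, fun i => (hne i).map,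
    fun i j hij => (disjoint_map _).2 (disjoint_colorClass g hij),
    iUnion_coe_map_subtype_colorClass g, fun i => ?_⟩
  calc Metric.infDist _ _ ≤ dist (mean univ z) (mean (colorClass g i) z) :=
        Metric.infDist_le_dist_of_mem (by rw [coe_map]; exact mean_mem_convexHull (hne i) z)
    _ ≤ 2 * √(k / n) * Metric.diam (P : Set (EuclideanSpace ℝ (Fin d))) := by
        rw [dist_comm, dist_eq_norm]
        exact le_two_mul_sqrt_div_mul hk1 hkn (norm_nonneg _) Metric.diam_nonneg (hbound i)
    _ ≤ _ := by
        gcongr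
        exact le_add_of_nonneg_right (Real.sqrt_nonneg 2)
end
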